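/- arXiv:1610.02710 — 3 statements merged into one kernel-verified Lean document; each statement's English description precedes it below -/
import Mathlib

section
/- Soundness Theorem for the Hilbert system of MT₀: for all MT₀-formulas φ and ψ, if φ⊢_{MT₀}ψ then φ⊨ψ. -/
/-- Classical modal formulas: α ::= p | ⊥ | ¬α | α∧α | α⊗α | α→α | □α | ◇α,
where the negation ¬α abbreviates α→⊥. -/
inductive CForm : Type where
  | var : ℕ → CForm
  | bot : CForm
  | and : CForm → CForm → CForm
  | tensor : CForm → CForm → CForm
  | impl : CForm → CForm → CForm
  | box : CForm → CForm
  | dia : CForm → CForm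

/-- ¬α abbreviates α→⊥. -/
def CForm.neg (α : CForm) : CForm := α.impl .bot

/-- Formulas of full modal downward closed team logic MT₀:
φ ::= α | =(α₁,…,αₙ,β) | φ∧φ | φ⊗φ | φ∨φ | φ→φ | □φ | ◇φ, with α,αᵢ,β classical. -/
inductive MTForm : Type where
  | var : ℕ → MTForm
  | bot : MTForm
  | dep : List CForm → CForm → MTForm
  | and : MTForm → MTForm → MTForm
  | tensor : MTForm → MTForm → MTForm
  | or : MTForm → MTForm → MTForm
  | impl : MTForm → MTForm → MTForm
  | box : MTForm → MTForm
  | dia : MTForm → MTForm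

/-- The structural embedding of classical modal formulas into MT₀ formulas. -/
def CForm.toMT : CForm → MTForm
  | .var p => .var p
  | .bot => .bot
  | .and α β => .and α.toMT β.toMT
  | .tensor α β => .tensor α.toMT β.toMT
  | .impl α β => .impl α.toMT β.toMT
  | .box α => .box α.toMT
  | .dia α => .dia α.toMT

/-- ¬φ abbreviates φ→⊥. -/
def mneg (φ : MTForm) : MTForm := φ.impl .bot

/-- φ↔ψ abbreviates (φ→ψ)∧(ψ→φ). -/
def MTForm.iff (φ ψ : MTForm) : MTForm := (φ.impl ψ).and (ψ.impl φ)

/-- The law of excluded middle formula α∨¬α for a classical formula α. -/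
def exclMid (α : CForm) : MTForm := (α.toMT).or (mneg α.toMT)

/-- Conjunction of a list of formulas; the empty conjunction is ⊥→⊥ (truth). -/
def bigAnd : List MTForm → MTForm
  | [] => MTForm.impl .bot .bot
  | [φ] => φ
  | φ :: ψ :: χs => .and φ (bigAnd (ψ :: χs))

/-- Axiom schemes of the Hilbert system of MT₀. -/
inductive MTAx : MTForm → Prop where
  -- axiom schemes of intuitionistic propositional logic
  | ipc1 (φ ψ : MTForm) : MTAx (φ.impl (ψ.impl φ))
  | ipc2 (φ ψ χ : MTForm) :
      MTAx ((φ.impl (ψ.impl χ)).impl ((φ.impl ψ).impl (φ.impl χ)))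
  | ipc3a (φ ψ : MTForm) : MTAx ((φ.and ψ).impl φ)
  | ipc3b (φ ψ : MTForm) : MTAx ((φ.and ψ).impl ψ)
  | ipc4 (φ χ : MTForm) : MTAx (φ.impl (χ.impl (φ.and χ)))
  | ipc5a (φ ψ : MTForm) : MTAx (φ.impl (φ.or ψ))
  | ipc5b (φ ψ : MTForm) : MTAx (ψ.impl (φ.or ψ))
  | ipc6 (φ ψ χ : MTForm) :
      MTAx ((φ.impl χ).impl ((ψ.impl χ).impl ((φ.or ψ).impl χ)))
  | ipc7 (φ : MTForm) : MTAx (MTForm.bot.impl φ)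
  -- the split axiom, for classical α
  | split (α : CForm) (φ ψ : MTForm) :
      MTAx ((α.toMT.impl (φ.or ψ)).impl ((α.toMT.impl φ).or (α.toMT.impl ψ)))
  -- double negation law for classical α
  | dne (α : CForm) : MTAx ((mneg (mneg α.toMT)).impl α.toMT)
  -- modal axiom schemes (Fischer Servi's IK)
  | kbox (φ ψ : MTForm) :
      MTAx ((MTForm.box (φ.impl ψ)).impl ((MTForm.box φ).impl (MTForm.box ψ)))
  | kdia (φ ψ : MTForm) :
      MTAx ((MTForm.box (φ.impl ψ)).impl ((MTForm.dia φ).impl (MTForm.dia ψ)))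
  | negDiaBot : MTAx (mneg (MTForm.dia .bot))
  | diaOr (φ ψ : MTForm) :
      MTAx ((MTForm.dia (φ.or ψ)).impl ((MTForm.dia φ).or (MTForm.dia ψ)))
  | fs (φ ψ : MTForm) :
      MTAx (((MTForm.dia φ).impl (MTForm.box ψ)).impl (MTForm.box (φ.impl ψ)))
  -- dependence atom axiom
  | depAx (αs : List CForm) (β : CForm) :
      MTAx ((MTForm.dep αs β).iff ((bigAnd (αs.map exclMid)).impl (exclMid β)))
  -- tensor axioms
  | tensor1 (φ ψ : MTForm) : MTAx (φ.impl (φ.tensor ψ))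
  | tensor2 (φ ψ : MTForm) (α : CForm) :
      MTAx ((φ.impl α.toMT).impl ((ψ.impl α.toMT).impl ((φ.tensor ψ).impl α.toMT)))
  | tensor3 (φ ψ χ θ : MTForm) :
      MTAx ((φ.impl χ).impl ((ψ.impl θ).impl ((φ.tensor ψ).impl (χ.tensor θ))))
  | tensorComm (φ ψ : MTForm) : MTAx ((φ.tensor ψ).impl (ψ.tensor φ))
  | tensorAssoc (φ ψ χ : MTForm) :
      MTAx ((φ.tensor (ψ.tensor χ)).impl ((φ.tensor ψ).tensor χ))
  | tensorOr (φ ψ χ : MTForm) :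
      MTAx ((φ.tensor (ψ.or χ)).impl ((φ.tensor ψ).or (φ.tensor χ)))
  -- interaction of box and diamond on classical formulas
  | boxDiaNeg (α : CForm) :
      MTAx ((mneg (MTForm.box α.toMT)).impl (MTForm.dia (mneg α.toMT)))
  -- box distributes over intuitionistic disjunction
  | boxOr (φ ψ : MTForm) :
      MTAx ((MTForm.box (φ.or ψ)).impl ((MTForm.box φ).or (MTForm.box ψ)))

/-- Theorems of the Hilbert system of MT₀ (derivations from no assumptions,
using modus ponens and necessitation). -/
inductive MTThm : MTForm → Prop where
  | ax {φ : MTForm} : MTAx φ → MTThm φ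
  | mp {φ ψ : MTForm} : MTThm (φ.impl ψ) → MTThm φ → MTThm ψ
  | nec {φ : MTForm} : MTThm φ → MTThm φ.box

/-- φ⊢ψ : derivations of ψ from the assumption φ, in which necessitation is
applied only to theorems. -/
inductive MTDer (γ : MTForm) : MTForm → Prop where
  | hyp : MTDer γ γ
  | thm {φ : MTForm} : MTThm φ → MTDer γ φ
  | mp {φ ψ : MTForm} : MTDer γ (φ.impl ψ) → MTDer γ φ → MTDer γ ψ

/-- A (classical modal) Kripke model M = (W,R,V) with W nonempty. -/
structure KModel where
  W : Type
  ne : Nonempty W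
  R : W → W → Prop
  V : ℕ → Set W

/-- R(X) = {w : ∃ v ∈ X, vRw}. -/
def KModel.img (M : KModel) (X : Set M.W) : Set M.W := {w | ∃ v ∈ X, M.R v w}

/-- Y is a successor team of X: Y ⊆ R(X) and Y ∩ R(w) ≠ ∅ for every w ∈ X. -/
def KModel.succT (M : KModel) (X Y : Set M.W) : Prop :=
  Y ⊆ M.img X ∧ ∀ w ∈ X, ∃ u ∈ Y, M.R w u

/-- Team semantics for classical modal formulas. -/
def KModel.csat (M : KModel) : Set M.W → CForm → Prop
  | X, .var p => X ⊆ M.V p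
  | X, .bot => X = ∅
  | X, .and α β => M.csat X α ∧ M.csat X β
  | X, .tensor α β => ∃ Y Z, X = Y ∪ Z ∧ M.csat Y α ∧ M.csat Z β
  | X, .impl α β => ∀ Y ⊆ X, M.csat Y α → M.csat Y β
  | X, .box α => M.csat (M.img X) α
  | X, .dia α => ∃ Y, M.succT X Y ∧ M.csat Y α

/-- Team semantics for MT₀ formulas. -/
def KModel.sat (M : KModel) : Set M.W → MTForm → Prop
  | X, .var p => X ⊆ M.V p
  | X, .bot => X = ∅
  | X, .dep αs β => ∀ w ∈ X, ∀ u ∈ X,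
      (∀ α ∈ αs, (M.csat {w} α ↔ M.csat {u} α)) → (M.csat {w} β ↔ M.csat {u} β)
  | X, .and φ ψ => M.sat X φ ∧ M.sat X ψ
  | X, .tensor φ ψ => ∃ Y Z, X = Y ∪ Z ∧ M.sat Y φ ∧ M.sat Z ψ
  | X, .or φ ψ => M.sat X φ ∨ M.sat X ψ
  | X, .impl φ ψ => ∀ Y ⊆ X, M.sat Y φ → M.sat Y ψ
  | X, .box φ => M.sat (M.img X) φ
  | X, .dia φ => ∃ Y, M.succT X Y ∧ M.sat Y φ

/-- φ⊨ψ : semantic entailment. -/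
def MTEntails (φ ψ : MTForm) : Prop := ∀ (M : KModel) (X : Set M.W), M.sat X φ → M.sat X ψ

section Aux

variable {M : KModel}

lemma img_mono {X Y : Set M.W} (h : X ⊆ Y) : M.img X ⊆ M.img Y := by
  rintro w ⟨v, hv, hr⟩; exact ⟨v, h hv, hr⟩

@[simp] lemma img_empty : M.img (∅ : Set M.W) = ∅ := by
  ext w; simp [KModel.img]

lemma sat_empty (φ : MTForm) : M.sat ∅ φ := by
  induction φ with
  | var p => intro w hw; exact absurd hw (by simp)
  | bot => rfl
  | dep αs β => intro w hw; exact absurd hw (by simp)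
  | and φ ψ ih1 ih2 => exact ⟨ih1, ih2⟩
  | tensor φ ψ ih1 ih2 => exact ⟨∅, ∅, by simp, ih1, ih2⟩
  | or φ ψ ih1 ih2 => exact Or.inl ih1
  | impl φ ψ ih1 ih2 =>
      intro Y hY _
      have : Y = ∅ := Set.subset_empty_iff.mp hY
      subst this; exact ih2
  | box φ ih => show M.sat (M.img ∅) φ; rw [img_empty]; exact ih
  | dia φ ih =>
      exact ⟨∅, ⟨by simp, fun w hw => absurd hw (by simp)⟩, ih⟩

lemma csat_dc {α : CForm} : ∀ {X Y : Set M.W}, M.csat X α → Y ⊆ X → M.csat Y α := by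
  induction α with
  | var p => exact fun h hYX => hYX.trans h
  | bot => exact fun h hYX => Set.subset_empty_iff.mp (h ▸ hYX)
  | and α β ih1 ih2 => exact fun h hYX => ⟨ih1 h.1 hYX, ih2 h.2 hYX⟩
  | tensor α β ih1 ih2 =>
      rintro X Y ⟨A, B, rfl, hA, hB⟩ hYX
      refine ⟨A ∩ Y, B ∩ Y, ?_, ih1 hA Set.inter_subset_left, ih2 hB Set.inter_subset_left⟩
      rw [← Set.union_inter_distrib_right, Set.inter_eq_right.mpr hYX]
  | impl α β ih1 ih2 =>
      intro X Y h hYX Z hZ hZα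
      exact h Z (hZ.trans hYX) hZα
  | box α ih => exact fun h hYX => ih h (img_mono hYX)
  | dia α ih =>
      rintro X Y ⟨U, ⟨hU1, hU2⟩, hα⟩ hYX
      refine ⟨U ∩ M.img Y, ⟨Set.inter_subset_right, fun w hw => ?_⟩,
        ih hα Set.inter_subset_left⟩
      obtain ⟨u, hu, hru⟩ := hU2 w (hYX hw)
      exact ⟨u, ⟨hu, ⟨w, hw, hru⟩⟩, hru⟩

lemma csat_sing {α : CForm} : ∀ {X : Set M.W}, (∀ w ∈ X, M.csat {w} α) → M.csat X α := by
  induction α with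
  | var p =>
      intro X h w hw
      exact h w hw rfl
  | bot =>
      intro X h
      exact Set.eq_empty_iff_forall_notMem.mpr fun w hw =>
        (Set.singleton_ne_empty w) (h w hw)
  | and α β ih1 ih2 =>
      exact fun h => ⟨ih1 fun w hw => (h w hw).1, ih2 fun w hw => (h w hw).2⟩
  | tensor α β ih1 ih2 =>
      intro X h
      refine ⟨{w ∈ X | M.csat {w} α}, {w ∈ X | M.csat {w} β}, ?_,
        ih1 fun w hw => hw.2, ih2 fun w hw => hw.2⟩
      apply Set.Subset.antisymm
      · intro w hw
        obtain ⟨A, B, hAB, hA, hB⟩ := h w hw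
        have hwAB : w ∈ A ∪ B := hAB ▸ rfl
        cases hwAB with
        | inl hwA =>
            have hAs : A ⊆ {w} := by rw [hAB]; exact Set.subset_union_left
            have : A = {w} := hAs.antisymm (Set.singleton_subset_iff.mpr hwA)
            exact Or.inl ⟨hw, this ▸ hA⟩
        | inr hwB =>
            have hBs : B ⊆ {w} := by rw [hAB]; exact Set.subset_union_right
            have : B = {w} := hBs.antisymm (Set.singleton_subset_iff.mpr hwB)
            exact Or.inr ⟨hw, this ▸ hB⟩
      · exact Set.union_subset (fun w hw => hw.1) (fun w hw => hw.1)
  | impl α β ih1 ih2 =>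
      intro X h Z hZX hZα
      apply ih2
      intro u hu
      exact h u (hZX hu) {u} subset_rfl (csat_dc hZα (Set.singleton_subset_iff.mpr hu))
  | box α ih =>
      intro X h
      apply ih
      rintro u ⟨w, hw, hr⟩
      exact csat_dc (h w hw) (Set.singleton_subset_iff.mpr ⟨w, rfl, hr⟩)
  | dia α ih =>
      intro X h
      refine ⟨{u | ∃ w ∈ X, ∃ Yw, M.succT {w} Yw ∧ M.csat Yw α ∧ u ∈ Yw}, ⟨?_, ?_⟩, ?_⟩
      · rintro u ⟨w, hw, Yw, ⟨hsub, _⟩, _, huY⟩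
        obtain ⟨v, hv, hr⟩ := hsub huY
        exact ⟨w, hw, (Set.eq_of_mem_singleton hv) ▸ hr⟩
      · intro w hw
        obtain ⟨Yw, ⟨hsub, hsucc⟩, hα⟩ := h w hw
        obtain ⟨u, hu, hr⟩ := hsucc w rfl
        exact ⟨u, ⟨w, hw, Yw, ⟨hsub, hsucc⟩, hα, hu⟩, hr⟩
      · apply ih
        rintro u ⟨w, hw, Yw, _, hα, huY⟩
        exact csat_dc hα (Set.singleton_subset_iff.mpr huY)

lemma csat_flat {α : CForm} {X : Set M.W} :
    M.csat X α ↔ ∀ w ∈ X, M.csat {w} α :=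
  ⟨fun h w hw => csat_dc h (Set.singleton_subset_iff.mpr hw), csat_sing⟩

lemma sat_toMT {α : CForm} : ∀ {X : Set M.W}, M.sat X α.toMT ↔ M.csat X α := by
  induction α with
  | var p => intro X; simp [CForm.toMT, KModel.sat, KModel.csat]
  | bot => intro X; simp [CForm.toMT, KModel.sat, KModel.csat]
  | and α β ih1 ih2 => intro X; simp [CForm.toMT, KModel.sat, KModel.csat, ih1, ih2]
  | tensor α β ih1 ih2 => intro X; simp [CForm.toMT, KModel.sat, KModel.csat, ih1, ih2]
  | impl α β ih1 ih2 => intro X; simp [CForm.toMT, KModel.sat, KModel.csat, ih1, ih2]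
  | box α ih => intro X; simp [CForm.toMT, KModel.sat, KModel.csat, ih]
  | dia α ih => intro X; simp [CForm.toMT, KModel.sat, KModel.csat, ih]

lemma sat_dc {φ : MTForm} : ∀ {X Y : Set M.W}, M.sat X φ → Y ⊆ X → M.sat Y φ := by
  induction φ with
  | var p => exact fun h hYX => hYX.trans h
  | bot => exact fun h hYX => Set.subset_empty_iff.mp (h ▸ hYX)
  | dep αs β =>
      intro X Y h hYX w hw u hu hag
      exact h w (hYX hw) u (hYX hu) hag
  | and φ ψ ih1 ih2 => exact fun h hYX => ⟨ih1 h.1 hYX, ih2 h.2 hYX⟩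
  | tensor φ ψ ih1 ih2 =>
      rintro X Y ⟨A, B, rfl, hA, hB⟩ hYX
      refine ⟨A ∩ Y, B ∩ Y, ?_, ih1 hA Set.inter_subset_left, ih2 hB Set.inter_subset_left⟩
      rw [← Set.union_inter_distrib_right, Set.inter_eq_right.mpr hYX]
  | or φ ψ ih1 ih2 =>
      rintro X Y (h | h) hYX
      · exact Or.inl (ih1 h hYX)
      · exact Or.inr (ih2 h hYX)
  | impl φ ψ ih1 ih2 =>
      intro X Y h hYX Z hZ hZφ
      exact h Z (hZ.trans hYX) hZφ
  | box φ ih => exact fun h hYX => ih h (img_mono hYX)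
  | dia φ ih =>
      rintro X Y ⟨U, ⟨hU1, hU2⟩, hφ⟩ hYX
      refine ⟨U ∩ M.img Y, ⟨Set.inter_subset_right, fun w hw => ?_⟩,
        ih hφ Set.inter_subset_left⟩
      obtain ⟨u, hu, hru⟩ := hU2 w (hYX hw)
      exact ⟨u, ⟨hu, ⟨w, hw, hru⟩⟩, hru⟩

lemma mneg_char {α : CForm} {X : Set M.W} :
    M.sat X (mneg α.toMT) ↔ ∀ w ∈ X, ¬ M.csat {w} α := by
  constructor
  · intro h w hw hc
    have : ({w} : Set M.W) = ∅ :=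
      h {w} (Set.singleton_subset_iff.mpr hw) (sat_toMT.mpr hc)
    exact Set.singleton_ne_empty w this
  · intro h Z hZ hZα
    refine Set.eq_empty_iff_forall_notMem.mpr fun w hw => h w (hZ hw) ?_
    exact csat_dc (sat_toMT.mp hZα) (Set.singleton_subset_iff.mpr hw)

lemma exclMid_sat {α : CForm} {X : Set M.W} :
    M.sat X (exclMid α) ↔ ((∀ w ∈ X, M.csat {w} α) ∨ ∀ w ∈ X, ¬ M.csat {w} α) := by
  show (M.sat X α.toMT ∨ M.sat X (mneg α.toMT)) ↔ _
  rw [sat_toMT, csat_flat, mneg_char]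

lemma bigAnd_sat (M : KModel) (X : Set M.W) :
    ∀ l : List MTForm, (M.sat X (bigAnd l) ↔ ∀ φ ∈ l, M.sat X φ)
  | [] => by
      simp only [bigAnd, List.not_mem_nil, false_implies, implies_true, iff_true]
      intro Y hY h; exact h
  | [φ] => by simp [bigAnd]
  | φ :: ψ :: χs => by
      have ih := bigAnd_sat M X (ψ :: χs)
      show M.sat X φ ∧ M.sat X (bigAnd (ψ :: χs)) ↔ _
      rw [ih]; simp

lemma ax_sound {φ : MTForm} (h : MTAx φ) (M : KModel) (X : Set M.W) : M.sat X φ := by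
  cases h with
  | ipc1 φ ψ =>
      intro Y _ hY Z hZ _
      exact sat_dc hY hZ
  | ipc2 φ ψ χ =>
      intro Y _ h1 Z hZY h2 W hWZ h3
      exact h1 W (hWZ.trans hZY) h3 W subset_rfl (h2 W hWZ h3)
  | ipc3a φ ψ => intro Y _ hY; exact hY.1
  | ipc3b φ ψ => intro Y _ hY; exact hY.2
  | ipc4 φ χ =>
      intro Y _ hY Z hZY hZ
      exact ⟨sat_dc hY hZY, hZ⟩
  | ipc5a φ ψ => intro Y _ hY; exact Or.inl hY
  | ipc5b φ ψ => intro Y _ hY; exact Or.inr hY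
  | ipc6 φ ψ χ =>
      intro Y _ h1 Z hZY h2 W hWZ h3
      cases h3 with
      | inl h => exact h1 W (hWZ.trans hZY) h
      | inr h => exact h2 W hWZ h
  | ipc7 φ =>
      intro Y _ hY
      have : Y = ∅ := hY
      subst this; exact sat_empty φ
  | split α φ ψ =>
      intro Y _ h
      have hYα : M.sat {w ∈ Y | M.csat {w} α} α.toMT :=
        sat_toMT.mpr (csat_sing fun w hw => hw.2)
      have := h {w ∈ Y | M.csat {w} α} (fun w hw => hw.1) hYα
      cases this with
      | inl hφ =>
          refine Or.inl fun Z hZY hZα => sat_dc hφ fun w hw => ⟨hZY hw, ?_⟩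
          exact csat_dc (sat_toMT.mp hZα) (Set.singleton_subset_iff.mpr hw)
      | inr hψ =>
          refine Or.inr fun Z hZY hZα => sat_dc hψ fun w hw => ⟨hZY hw, ?_⟩
          exact csat_dc (sat_toMT.mp hZα) (Set.singleton_subset_iff.mpr hw)
  | dne α =>
      intro Y _ h
      apply sat_toMT.mpr
      apply csat_sing
      intro w hw
      by_contra hc
      have : ({w} : Set M.W) = ∅ := by
        apply h {w} (Set.singleton_subset_iff.mpr hw)
        exact mneg_char.mpr fun u hu => (Set.eq_of_mem_singleton hu) ▸ hc
      exact Set.singleton_ne_empty w this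
  | kbox φ ψ =>
      intro Y _ h Z hZY hZ
      exact h (M.img Z) (img_mono hZY) hZ
  | kdia φ ψ =>
      rintro Y _ h Z hZY ⟨U, hU, hφ⟩
      exact ⟨U, hU, h U (hU.1.trans (img_mono hZY)) hφ⟩
  | negDiaBot =>
      rintro Y _ ⟨U, ⟨_, hsucc⟩, hbot⟩
      have hU : U = ∅ := hbot
      subst hU
      refine Set.eq_empty_iff_forall_notMem.mpr fun w hw => ?_
      obtain ⟨u, hu, _⟩ := hsucc w hw
      exact absurd hu (by simp)
  | diaOr φ ψ =>
      rintro Y _ ⟨U, hU, (h | h)⟩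
      · exact Or.inl ⟨U, hU, h⟩
      · exact Or.inr ⟨U, hU, h⟩
  | fs φ ψ =>
      intro Y _ h Z hZY hZφ
      set Y₀ : Set M.W := {w ∈ Y | ∃ u ∈ Z, M.R w u} with hY₀
      have hsucc : M.succT Y₀ Z := by
        refine ⟨fun u hu => ?_, fun w hw => hw.2⟩
        obtain ⟨w, hw, hr⟩ := hZY hu
        exact ⟨w, ⟨hw, u, hu, hr⟩, hr⟩
      have hbox := h Y₀ (fun w hw => hw.1) ⟨Z, hsucc, hZφ⟩
      exact sat_dc hbox hsucc.1
  | depAx αs β =>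
      constructor
      · intro Y _ hdep Z hZY hZbig
        have hag : ∀ α ∈ αs, ∀ w ∈ Z, ∀ u ∈ Z, (M.csat {w} α ↔ M.csat {u} α) := by
          intro α hα w hw u hu
          have := exclMid_sat.mp ((bigAnd_sat M Z (αs.map exclMid)).mp hZbig
            (exclMid α) (List.mem_map_of_mem hα))
          cases this with
          | inl h => exact iff_of_true (h w hw) (h u hu)
          | inr h => exact iff_of_false (h w hw) (h u hu)
        have hagβ : ∀ w ∈ Z, ∀ u ∈ Z, (M.csat {w} β ↔ M.csat {u} β) := fun w hw u hu =>
          hdep w (hZY hw) u (hZY hu) fun α hα => hag α hα w hw u hu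
        apply exclMid_sat.mpr
        by_cases hex : ∃ w ∈ Z, M.csat {w} β
        · obtain ⟨w, hw, hc⟩ := hex
          exact Or.inl fun u hu => (hagβ w hw u hu).mp hc
        · push_neg at hex
          exact Or.inr hex
      · intro Y _ h w hw u hu hag
        have hpair : ({w, u} : Set M.W) ⊆ Y := by
          intro v hv
          rcases hv with rfl | hv
          · exact hw
          · exact (Set.eq_of_mem_singleton hv) ▸ hu
        have hbig : M.sat {w, u} (bigAnd (αs.map exclMid)) := by
          apply (bigAnd_sat M _ _).mpr
          intro χ hχ
          obtain ⟨α, hα, rfl⟩ := List.mem_map.mp hχ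
          apply exclMid_sat.mpr
          by_cases hc : M.csat {w} α
          · refine Or.inl fun v hv => ?_
            rcases hv with rfl | hv
            · exact hc
            · exact (Set.eq_of_mem_singleton hv) ▸ ((hag α hα).mp hc)
          · refine Or.inr fun v hv => ?_
            rcases hv with rfl | hv
            · exact hc
            · exact (Set.eq_of_mem_singleton hv) ▸ (fun hcu => hc ((hag α hα).mpr hcu))
        have := exclMid_sat.mp (h {w, u} hpair hbig)
        cases this with
        | inl hβ => exact iff_of_true (hβ w (by simp)) (hβ u (by simp))
        | inr hβ => exact iff_of_false (hβ w (by simp)) (hβ u (by simp))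
  | tensor1 φ ψ =>
      intro Y _ hY
      exact ⟨Y, ∅, by simp, hY, sat_empty ψ⟩
  | tensor2 φ ψ α =>
      rintro Y _ h1 Z hZY h2 W hWZ ⟨U, V, rfl, hU, hV⟩
      apply sat_toMT.mpr
      apply csat_sing
      rintro w (hw | hw)
      · exact csat_dc (sat_toMT.mp (h1 U ((Set.subset_union_left.trans hWZ).trans hZY) hU))
          (Set.singleton_subset_iff.mpr hw)
      · exact csat_dc (sat_toMT.mp (h2 V (Set.subset_union_right.trans hWZ) hV))
          (Set.singleton_subset_iff.mpr hw)
  | tensor3 φ ψ χ θ =>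
      rintro Y _ h1 Z hZY h2 W hWZ ⟨U, V, rfl, hU, hV⟩
      exact ⟨U, V, rfl, h1 U ((Set.subset_union_left.trans hWZ).trans hZY) hU,
        h2 V (Set.subset_union_right.trans hWZ) hV⟩
  | tensorComm φ ψ =>
      rintro Y _ ⟨U, V, rfl, hU, hV⟩
      exact ⟨V, U, Set.union_comm U V, hV, hU⟩
  | tensorAssoc φ ψ χ =>
      rintro Y _ ⟨U, V, rfl, hU, A, B, rfl, hA, hB⟩
      exact ⟨U ∪ A, B, (Set.union_assoc U A B).symm, ⟨U, A, rfl, hU, hA⟩, hB⟩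
  | tensorOr φ ψ χ =>
      rintro Y _ ⟨U, V, rfl, hU, (hV | hV)⟩
      · exact Or.inl ⟨U, V, rfl, hU, hV⟩
      · exact Or.inr ⟨U, V, rfl, hU, hV⟩
  | boxDiaNeg α =>
      intro Y _ h
      refine ⟨{u ∈ M.img Y | ¬ M.csat {u} α}, ⟨fun u hu => hu.1, ?_⟩,
        mneg_char.mpr fun u hu => hu.2⟩
      intro w hw
      by_contra hc
      push_neg at hc
      have hwbox : M.sat {w} (MTForm.box α.toMT) := by
        show M.sat (M.img {w}) α.toMT
        apply sat_toMT.mpr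
        apply csat_sing
        rintro u ⟨v, hv, hr⟩
        have hvw : v = w := Set.eq_of_mem_singleton hv
        have hr' : M.R w u := hvw ▸ hr
        by_contra hcu
        exact hc u ⟨⟨w, hw, hr'⟩, hcu⟩ hr'
      have : ({w} : Set M.W) = ∅ := h {w} (Set.singleton_subset_iff.mpr hw) hwbox
      exact Set.singleton_ne_empty w this
  | boxOr φ ψ =>
      rintro Y _ (h | h)
      · exact Or.inl h
      · exact Or.inr h

lemma thm_sound {φ : MTForm} (h : MTThm φ) : ∀ (M : KModel) (X : Set M.W), M.sat X φ := by
  induction h with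
  | ax h => exact fun M X => ax_sound h M X
  | mp h1 h2 ih1 ih2 => exact fun M X => ih1 M X X subset_rfl (ih2 M X)
  | nec h ih => exact fun M X => ih M (M.img X)

end Aux

/-- Soundness of the Hilbert system of MT₀. -/
theorem mt0_soundness (φ ψ : MTForm) : MTDer φ ψ → MTEntails φ ψ := by
  intro h
  induction h with
  | hyp => exact fun M X h => h
  | thm h => exact fun M X _ => thm_sound h M X
  | mp h1 h2 ih1 ih2 => exact fun M X hX => ih1 M X hX X subset_rfl (ih2 M X hX)
end

section
/- Normal Form Theorem for MT₀: for every MT₀-formula φ there exists a finite nonempty list of classical modal formulas α₁,…,αₙ such that ⊢_{MT₀} φ↔(α₁∨⋯∨αₙ) (intuitionistic disjunction ∨). -/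
/-- Intuitionistic disjunction of a list of formulas (used for nonempty lists). -/
def bigOr : List MTForm → MTForm
  | [] => .bot
  | [φ] => φ
  | φ :: ψ :: χs => .or φ (bigOr (ψ :: χs))


section NormalFormProof
open MTForm

/-- Derivations from a finite list of assumptions. -/
inductive Der (G : List MTForm) : MTForm → Prop where
  | hyp {φ} : φ ∈ G → Der G φ
  | thm {φ} : MTThm φ → Der G φ
  | mp {φ ψ} : Der G (φ.impl ψ) → Der G φ → Der G ψ

lemma Der.axm {G : List MTForm} {φ : MTForm} (h : MTAx φ) : Der G φ := .thm (.ax h)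

lemma Der.weak {G D : List MTForm} {φ : MTForm} (h : Der G φ) (s : ∀ x ∈ G, x ∈ D) : Der D φ := by
  induction h with
  | hyp h => exact .hyp (s _ h)
  | thm h => exact .thm h
  | mp _ _ ih1 ih2 => exact .mp ih1 ih2

lemma thm_id (φ : MTForm) : MTThm (φ.impl φ) :=
  .mp (.mp (.ax (.ipc2 φ (φ.impl φ) φ)) (.ax (.ipc1 _ _))) (.ax (.ipc1 _ _))

lemma ded {G : List MTForm} {γ φ : MTForm} (h : Der (γ :: G) φ) : Der G (γ.impl φ) := by
  induction h with
  | hyp h =>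
    rcases List.mem_cons.mp h with rfl | h
    · exact .thm (thm_id _)
    · exact .mp (.axm (.ipc1 _ _)) (.hyp h)
  | thm h => exact .mp (.axm (.ipc1 _ _)) (.thm h)
  | mp _ _ ih1 ih2 => exact .mp (.mp (.axm (.ipc2 _ _ _)) ih1) ih2

lemma Der.toThm {φ : MTForm} (h : Der [] φ) : MTThm φ := by
  induction h with
  | hyp h => simp at h
  | thm h => exact h
  | mp _ _ ih1 ih2 => exact .mp ih1 ih2

lemma thm1 {φ ψ : MTForm} (h : Der [φ] ψ) : MTThm (φ.impl ψ) := Der.toThm (ded h)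

lemma Der.andI {G : List MTForm} {φ ψ : MTForm} (h1 : Der G φ) (h2 : Der G ψ) : Der G (φ.and ψ) :=
  .mp (.mp (.axm (.ipc4 _ _)) h1) h2
lemma Der.andE1 {G : List MTForm} {φ ψ : MTForm} (h : Der G (φ.and ψ)) : Der G φ :=
  .mp (.axm (.ipc3a _ _)) h
lemma Der.andE2 {G : List MTForm} {φ ψ : MTForm} (h : Der G (φ.and ψ)) : Der G ψ :=
  .mp (.axm (.ipc3b _ _)) h
lemma Der.orE {G : List MTForm} {φ ψ χ : MTForm} (h : Der G (φ.or ψ))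
    (h1 : Der (φ :: G) χ) (h2 : Der (ψ :: G) χ) : Der G χ :=
  .mp (.mp (.mp (.axm (.ipc6 _ _ _)) (ded h1)) (ded h2)) h

lemma syl {φ ψ χ : MTForm} (h1 : MTThm (φ.impl ψ)) (h2 : MTThm (ψ.impl χ)) : MTThm (φ.impl χ) :=
  thm1 (.mp (.thm h2) (.mp (.thm h1) (.hyp (by simp))))
lemma iffI {φ ψ : MTForm} (h1 : MTThm (φ.impl ψ)) (h2 : MTThm (ψ.impl φ)) : MTThm (φ.iff ψ) :=
  .mp (.mp (.ax (.ipc4 _ _)) h1) h2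
lemma iff1 {φ ψ : MTForm} (h : MTThm (φ.iff ψ)) : MTThm (φ.impl ψ) := .mp (.ax (.ipc3a _ _)) h
lemma iff2 {φ ψ : MTForm} (h : MTThm (φ.iff ψ)) : MTThm (ψ.impl φ) := .mp (.ax (.ipc3b _ _)) h
lemma iff_refl (φ : MTForm) : MTThm (φ.iff φ) := iffI (thm_id φ) (thm_id φ)
lemma iff_trans {φ ψ χ : MTForm} (h1 : MTThm (φ.iff ψ)) (h2 : MTThm (ψ.iff χ)) : MTThm (φ.iff χ) :=
  iffI (syl (iff1 h1) (iff1 h2)) (syl (iff2 h2) (iff2 h1))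

lemma or_mono {φ ψ φ' ψ' : MTForm} (h1 : MTThm (φ.impl φ')) (h2 : MTThm (ψ.impl ψ')) :
    MTThm ((φ.or ψ).impl (φ'.or ψ')) :=
  .mp (.mp (.ax (.ipc6 _ _ _)) (syl h1 (.ax (.ipc5a _ _)))) (syl h2 (.ax (.ipc5b _ _)))
lemma tensor_mono {φ ψ φ' ψ' : MTForm} (h1 : MTThm (φ.impl φ')) (h2 : MTThm (ψ.impl ψ')) :
    MTThm ((φ.tensor ψ).impl (φ'.tensor ψ')) := .mp (.mp (.ax (.tensor3 _ _ _ _)) h1) h2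
lemma box_mono {φ ψ : MTForm} (h : MTThm (φ.impl ψ)) : MTThm ((box φ).impl (box ψ)) :=
  .mp (.ax (.kbox _ _)) (.nec h)
lemma dia_mono {φ ψ : MTForm} (h : MTThm (φ.impl ψ)) : MTThm ((dia φ).impl (dia ψ)) :=
  .mp (.ax (.kdia _ _)) (.nec h)

lemma imp_under {x y z : MTForm} (h : MTThm (y.impl z)) : MTThm ((x.impl y).impl (x.impl z)) :=
  thm1 (ded (.mp (.thm h)
    (.mp (show Der [x, x.impl y] (x.impl y) from .hyp (by simp)) (.hyp (by simp)))))

lemma mand_congr {φ ψ φ' ψ' : MTForm} (h1 : MTThm (φ.iff φ')) (h2 : MTThm (ψ.iff ψ')) :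
    MTThm ((φ.and ψ).iff (φ'.and ψ')) :=
  iffI (thm1 (.andI
        (.mp (.thm (iff1 h1)) (Der.andE1 (show Der [φ.and ψ] (φ.and ψ) from .hyp (by simp))))
        (.mp (.thm (iff1 h2)) (Der.andE2 (show Der [φ.and ψ] (φ.and ψ) from .hyp (by simp))))))
       (thm1 (.andI
        (.mp (.thm (iff2 h1)) (Der.andE1 (show Der [φ'.and ψ'] (φ'.and ψ') from .hyp (by simp))))
        (.mp (.thm (iff2 h2)) (Der.andE2 (show Der [φ'.and ψ'] (φ'.and ψ') from .hyp (by simp))))))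
lemma mor_congr {φ ψ φ' ψ' : MTForm} (h1 : MTThm (φ.iff φ')) (h2 : MTThm (ψ.iff ψ')) :
    MTThm ((φ.or ψ).iff (φ'.or ψ')) :=
  iffI (or_mono (iff1 h1) (iff1 h2)) (or_mono (iff2 h1) (iff2 h2))
lemma tensmor_congr {φ ψ φ' ψ' : MTForm} (h1 : MTThm (φ.iff φ')) (h2 : MTThm (ψ.iff ψ')) :
    MTThm ((φ.tensor ψ).iff (φ'.tensor ψ')) :=
  iffI (tensor_mono (iff1 h1) (iff1 h2)) (tensor_mono (iff2 h1) (iff2 h2))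
lemma mimpl_congr {φ ψ φ' ψ' : MTForm} (h1 : MTThm (φ.iff φ')) (h2 : MTThm (ψ.iff ψ')) :
    MTThm ((φ.impl ψ).iff (φ'.impl ψ')) := by
  have f : ∀ {a b c d : MTForm}, MTThm (c.impl a) → MTThm (b.impl d) →
      MTThm ((a.impl b).impl (c.impl d)) := @fun a b c d hca hbd =>
    thm1 (ded (.mp (.thm hbd) (.mp (show Der [c, a.impl b] (a.impl b) from .hyp (by simp))
      (.mp (.thm hca) (.hyp (by simp))))))
  exact iffI (f (iff2 h1) (iff1 h2)) (f (iff1 h1) (iff2 h2))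
lemma mbox_congr {φ ψ : MTForm} (h : MTThm (φ.iff ψ)) : MTThm ((box φ).iff (box ψ)) :=
  iffI (box_mono (iff1 h)) (box_mono (iff2 h))
lemma mdia_congr {φ ψ : MTForm} (h : MTThm (φ.iff ψ)) : MTThm ((dia φ).iff (dia ψ)) :=
  iffI (dia_mono (iff1 h)) (dia_mono (iff2 h))

/-! ### bigOr and bigAnd lemmas -/

lemma bigOr_intro : ∀ {l : List MTForm} {φ : MTForm}, φ ∈ l → MTThm (φ.impl (bigOr l)) := by
  intro l
  induction l with
  | nil => intro φ h; simp at h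
  | cons a l ih =>
    intro φ h
    cases l with
    | nil =>
      rcases List.mem_cons.mp h with rfl | h
      · exact thm_id _
      · simp at h
    | cons b m =>
      rcases List.mem_cons.mp h with rfl | h
      · exact .ax (.ipc5a _ _)
      · exact syl (ih h) (.ax (.ipc5b _ _))

lemma bigOr_elim : ∀ {l : List MTForm} {χ : MTForm}, (∀ φ ∈ l, MTThm (φ.impl χ)) →
    MTThm ((bigOr l).impl χ) := by
  intro l
  induction l with
  | nil => intro χ _; exact .ax (.ipc7 _)
  | cons a l ih =>
    intro χ h
    cases l with
    | nil => exact h a (by simp)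
    | cons b m =>
      exact .mp (.mp (.ax (.ipc6 _ _ _)) (h a (by simp)))
        (ih (fun φ hφ => h φ (List.mem_cons_of_mem _ hφ)))

lemma Der.bigOrE : ∀ (l : List MTForm) {G : List MTForm} {χ : MTForm}, Der G (bigOr l) →
    (∀ φ ∈ l, Der (φ :: G) χ) → Der G χ := by
  intro l
  induction l with
  | nil => intro G χ h _; exact .mp (.axm (.ipc7 _)) h
  | cons a l ih =>
    intro G χ h hs
    cases l with
    | nil => exact .mp (ded (hs a (by simp))) h
    | cons b m =>
      refine Der.orE h (hs a (by simp)) ?_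
      refine ih (G := bigOr (b :: m) :: G) (.hyp (by simp)) ?_
      intro φ hφ
      exact (hs φ (List.mem_cons_of_mem _ hφ)).weak (by intro x hx; simp at hx ⊢; tauto)

lemma bigAndI {G : List MTForm} : ∀ (l : List MTForm), (∀ φ ∈ l, Der G φ) →
    Der G (bigAnd l) := by
  intro l
  induction l with
  | nil => intro _; exact .thm (thm_id _)
  | cons a l ih =>
    intro h
    cases l with
    | nil => exact h a (by simp)
    | cons b m =>
      exact Der.andI (h a (by simp)) (ih (fun x hx => h x (List.mem_cons_of_mem _ hx)))

lemma bigAndE {G : List MTForm} : ∀ (l : List MTForm), Der G (bigAnd l) →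
    ∀ φ ∈ l, Der G φ := by
  intro l
  induction l with
  | nil => intro _ φ h; simp at h
  | cons a l ih =>
    intro h φ hφ
    cases l with
    | nil =>
      rcases List.mem_cons.mp hφ with rfl | hφ
      · exact h
      · simp at hφ
    | cons b m =>
      rcases List.mem_cons.mp hφ with rfl | hφ
      · exact h.andE1
      · exact ih h.andE2 φ hφ

/-! ### Normal forms -/

/-- φ has a normal form: a nonempty disjunction of classical formulas. -/
def Nf (φ : MTForm) : Prop :=
  ∃ αs : List CForm, αs ≠ [] ∧ MTThm (φ.iff (bigOr (αs.map CForm.toMT)))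

lemma nf_of_iff {φ ψ : MTForm} (h : MTThm (φ.iff ψ)) : Nf ψ → Nf φ :=
  fun ⟨αs, hne, hiff⟩ => ⟨αs, hne, iff_trans h hiff⟩

lemma nf_classical_list (cs : List CForm) (h : cs ≠ []) : Nf (bigOr (cs.map CForm.toMT)) :=
  ⟨cs, h, iff_refl _⟩

def cpairs (f : CForm → CForm → CForm) (as bs : List CForm) : List CForm :=
  as.flatMap fun a => bs.map fun b => f a b

lemma mem_cpairs {f : CForm → CForm → CForm} {as bs : List CForm} {a b : CForm}
    (ha : a ∈ as) (hb : b ∈ bs) : f a b ∈ cpairs f as bs := by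
  simp only [cpairs, List.mem_flatMap, List.mem_map]
  exact ⟨a, ha, b, hb, rfl⟩

lemma cpairs_ne_nil {f : CForm → CForm → CForm} {as bs : List CForm}
    (ha : as ≠ []) (hb : bs ≠ []) : cpairs f as bs ≠ [] := by
  obtain ⟨a, ha⟩ := List.exists_mem_of_ne_nil _ ha
  obtain ⟨b, hb⟩ := List.exists_mem_of_ne_nil _ hb
  exact List.ne_nil_of_mem (mem_cpairs ha hb)

lemma nf_and {φ ψ : MTForm} (hφ : Nf φ) (hψ : Nf ψ) : Nf (φ.and ψ) := by
  obtain ⟨as, ha, hφ⟩ := hφ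
  obtain ⟨bs, hb, hψ⟩ := hψ
  refine ⟨cpairs CForm.and as bs, cpairs_ne_nil ha hb,
    iff_trans (mand_congr hφ hψ) (iffI ?_ ?_)⟩
  · apply thm1
    have h0 : Der [(bigOr (as.map CForm.toMT)).and (bigOr (bs.map CForm.toMT))]
        ((bigOr (as.map CForm.toMT)).and (bigOr (bs.map CForm.toMT))) := .hyp (by simp)
    refine Der.bigOrE _ h0.andE1 ?_
    intro x hx
    simp only [List.mem_map] at hx
    obtain ⟨a, ha', rfl⟩ := hx
    refine Der.bigOrE _ (h0.andE2.weak (by intro y hy; simp at hy ⊢; tauto)) ?_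
    intro y hy
    simp only [List.mem_map] at hy
    obtain ⟨b, hb', rfl⟩ := hy
    refine Der.mp
      (.thm (bigOr_intro (φ := (a.and b).toMT)
        (l := (cpairs CForm.and as bs).map CForm.toMT) ?_))
      (show Der _ ((a.and b).toMT) from Der.andI (.hyp (by simp)) (.hyp (by simp)))
    simp only [List.mem_map]
    exact ⟨a.and b, mem_cpairs ha' hb', rfl⟩
  · apply bigOr_elim
    intro x hx
    simp only [List.mem_map] at hx
    obtain ⟨c, hc, rfl⟩ := hx
    simp only [cpairs, List.mem_flatMap, List.mem_map] at hc
    obtain ⟨a, ha', b, hb', rfl⟩ := hc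
    refine thm1 (Der.andI
      (.mp (.thm (bigOr_intro (List.mem_map_of_mem ha')))
        (Der.andE1 (show Der [(a.and b).toMT] ((a.and b).toMT) from .hyp (by simp))))
      (.mp (.thm (bigOr_intro (List.mem_map_of_mem hb')))
        (Der.andE2 (show Der [(a.and b).toMT] ((a.and b).toMT) from .hyp (by simp)))))

lemma nf_or {φ ψ : MTForm} (hφ : Nf φ) (hψ : Nf ψ) : Nf (φ.or ψ) := by
  obtain ⟨as, ha, hφ⟩ := hφ
  obtain ⟨bs, hb, hψ⟩ := hψ
  refine ⟨as ++ bs, by simp [ha], iff_trans (mor_congr hφ hψ) (iffI ?_ ?_)⟩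
  · refine .mp (.mp (.ax (.ipc6 _ _ _)) (bigOr_elim ?_)) (bigOr_elim ?_)
    · intro x hx
      apply bigOr_intro
      simp only [List.mem_map] at hx
      obtain ⟨a, ha', rfl⟩ := hx
      exact List.mem_map_of_mem (List.mem_append_left _ ha')
    · intro x hx
      apply bigOr_intro
      simp only [List.mem_map] at hx
      obtain ⟨b, hb', rfl⟩ := hx
      exact List.mem_map_of_mem (List.mem_append_right _ hb')
  · apply bigOr_elim
    intro x hx
    simp only [List.mem_map, List.mem_append] at hx
    obtain ⟨c, hc | hc, rfl⟩ := hx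
    · exact syl (bigOr_intro (List.mem_map_of_mem hc)) (.ax (.ipc5a _ _))
    · exact syl (bigOr_intro (List.mem_map_of_mem hc)) (.ax (.ipc5b _ _))

lemma nf_bigAnd : ∀ (l : List MTForm), (∀ φ ∈ l, Nf φ) → Nf (bigAnd l) := by
  intro l
  induction l with
  | nil => intro _; exact ⟨[CForm.bot.impl CForm.bot], by simp, iff_refl _⟩
  | cons a l ih =>
    intro h
    cases l with
    | nil => exact h a (by simp)
    | cons b m =>
      exact nf_and (h a (by simp)) (ih (fun x hx => h x (List.mem_cons_of_mem _ hx)))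

lemma split_list (α : CForm) : ∀ (bs : List CForm), bs ≠ [] →
    MTThm ((α.toMT.impl (bigOr (bs.map CForm.toMT))).impl
      (bigOr ((bs.map fun b => α.impl b).map CForm.toMT))) := by
  intro bs
  induction bs with
  | nil => intro h; exact absurd rfl h
  | cons b m ih =>
    intro _
    cases m with
    | nil => exact thm_id _
    | cons c m' =>
      exact syl (.ax (.split α b.toMT (bigOr ((c :: m').map CForm.toMT))))
        (or_mono (thm_id _) (ih (by simp)))

lemma nf_impl {φ ψ : MTForm} (hφ : Nf φ) (hψ : Nf ψ) : Nf (φ.impl ψ) := by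
  obtain ⟨as, ha, hφ⟩ := hφ
  obtain ⟨bs, hb, hψ⟩ := hψ
  apply nf_of_iff (mimpl_congr hφ hψ)
  have step1 : MTThm (((bigOr (as.map CForm.toMT)).impl (bigOr (bs.map CForm.toMT))).iff
      (bigAnd (as.map fun a => a.toMT.impl (bigOr (bs.map CForm.toMT))))) := by
    refine iffI (thm1 (bigAndI _ ?_)) (thm1 (ded ?_))
    · intro x hx
      simp only [List.mem_map] at hx
      obtain ⟨a, ha', rfl⟩ := hx
      refine ded (.mp
        (show Der [a.toMT, (bigOr (as.map CForm.toMT)).impl (bigOr (bs.map CForm.toMT))]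
          ((bigOr (as.map CForm.toMT)).impl (bigOr (bs.map CForm.toMT))) from .hyp (by simp))
        (.mp (.thm (bigOr_intro (List.mem_map_of_mem ha'))) (.hyp (by simp))))
    · refine Der.bigOrE (as.map CForm.toMT)
        (show Der [bigOr (as.map CForm.toMT),
            bigAnd (as.map fun a => a.toMT.impl (bigOr (bs.map CForm.toMT)))]
          (bigOr (as.map CForm.toMT)) from .hyp (by simp)) ?_
      intro x hx
      simp only [List.mem_map] at hx
      obtain ⟨a, ha', rfl⟩ := hx
      refine Der.mp (bigAndE (as.map fun a => a.toMT.impl (bigOr (bs.map CForm.toMT)))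
        (.hyp (by simp)) (a.toMT.impl (bigOr (bs.map CForm.toMT)))
        (List.mem_map_of_mem ha')) (.hyp (by simp))
  apply nf_of_iff step1
  apply nf_bigAnd
  intro x hx
  simp only [List.mem_map] at hx
  obtain ⟨a, ha', rfl⟩ := hx
  refine nf_of_iff (iffI (split_list a bs hb) (bigOr_elim ?_))
    (nf_classical_list (bs.map fun b => a.impl b) (by simpa using hb))
  intro x hx
  simp only [List.mem_map] at hx
  obtain ⟨c, ⟨b, hb', rfl⟩, rfl⟩ := hx
  exact imp_under (bigOr_intro (List.mem_map_of_mem hb'))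

lemma tensor_bigOr (φ : MTForm) : ∀ (l : List MTForm), l ≠ [] →
    MTThm ((φ.tensor (bigOr l)).impl (bigOr (l.map fun x => φ.tensor x))) := by
  intro l
  induction l with
  | nil => intro h; exact absurd rfl h
  | cons a m ih =>
    intro _
    cases m with
    | nil => exact thm_id _
    | cons b m' =>
      exact syl (.ax (.tensorOr φ a (bigOr (b :: m'))))
        (or_mono (thm_id _) (ih (by simp)))

lemma nf_tensor {φ ψ : MTForm} (hφ : Nf φ) (hψ : Nf ψ) : Nf (φ.tensor ψ) := by
  obtain ⟨as, ha, hφ⟩ := hφ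
  obtain ⟨bs, hb, hψ⟩ := hψ
  set A := bigOr (as.map CForm.toMT) with hA
  set B := bigOr (bs.map CForm.toMT) with hB
  refine ⟨cpairs CForm.tensor as bs, cpairs_ne_nil ha hb,
    iff_trans (tensmor_congr hφ hψ) (iffI ?_ ?_)⟩
  · refine syl (.ax (.tensorComm A B))
      (syl (tensor_bigOr B (as.map CForm.toMT) (by simpa using ha)) (bigOr_elim ?_))
    intro x hx
    simp only [List.mem_map] at hx
    obtain ⟨y, ⟨a, ha', rfl⟩, rfl⟩ := hx
    refine syl (.ax (.tensorComm B a.toMT))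
      (syl (tensor_bigOr a.toMT (bs.map CForm.toMT) (by simpa using hb)) (bigOr_elim ?_))
    intro x hx
    simp only [List.mem_map] at hx
    obtain ⟨y, ⟨b, hb', rfl⟩, rfl⟩ := hx
    refine bigOr_intro ?_
    simp only [List.mem_map]
    exact ⟨a.tensor b, mem_cpairs ha' hb', rfl⟩
  · apply bigOr_elim
    intro x hx
    simp only [List.mem_map] at hx
    obtain ⟨c, hc, rfl⟩ := hx
    simp only [cpairs, List.mem_flatMap, List.mem_map] at hc
    obtain ⟨a, ha', b, hb', rfl⟩ := hc
    exact tensor_mono (bigOr_intro (List.mem_map_of_mem ha'))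
      (bigOr_intro (List.mem_map_of_mem hb'))

lemma box_bigOr : ∀ (l : List MTForm), l ≠ [] →
    MTThm ((box (bigOr l)).impl (bigOr (l.map MTForm.box))) := by
  intro l
  induction l with
  | nil => intro h; exact absurd rfl h
  | cons a m ih =>
    intro _
    cases m with
    | nil => exact thm_id _
    | cons b m' =>
      exact syl (.ax (.boxOr a (bigOr (b :: m')))) (or_mono (thm_id _) (ih (by simp)))

lemma dia_bigOr : ∀ (l : List MTForm), l ≠ [] →
    MTThm ((dia (bigOr l)).impl (bigOr (l.map MTForm.dia))) := by
  intro l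
  induction l with
  | nil => intro h; exact absurd rfl h
  | cons a m ih =>
    intro _
    cases m with
    | nil => exact thm_id _
    | cons b m' =>
      exact syl (.ax (.diaOr a (bigOr (b :: m')))) (or_mono (thm_id _) (ih (by simp)))

lemma map_box_comm (as : List CForm) :
    (as.map CForm.toMT).map MTForm.box = (as.map CForm.box).map CForm.toMT := by
  simp only [List.map_map]; rfl

lemma map_dia_comm (as : List CForm) :
    (as.map CForm.toMT).map MTForm.dia = (as.map CForm.dia).map CForm.toMT := by
  simp only [List.map_map]; rfl

lemma nf_box {φ : MTForm} (hφ : Nf φ) : Nf φ.box := by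
  obtain ⟨as, ha, hφ⟩ := hφ
  refine ⟨as.map CForm.box, by simpa using ha, iff_trans (mbox_congr hφ) (iffI ?_ ?_)⟩
  · have := box_bigOr (as.map CForm.toMT) (by simpa using ha)
    rwa [map_box_comm] at this
  · apply bigOr_elim
    intro x hx
    simp only [List.mem_map] at hx
    obtain ⟨c, ⟨a, ha', rfl⟩, rfl⟩ := hx
    exact box_mono (bigOr_intro (List.mem_map_of_mem ha'))

lemma nf_dia {φ : MTForm} (hφ : Nf φ) : Nf φ.dia := by
  obtain ⟨as, ha, hφ⟩ := hφ
  refine ⟨as.map CForm.dia, by simpa using ha, iff_trans (mdia_congr hφ) (iffI ?_ ?_)⟩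
  · have := dia_bigOr (as.map CForm.toMT) (by simpa using ha)
    rwa [map_dia_comm] at this
  · apply bigOr_elim
    intro x hx
    simp only [List.mem_map] at hx
    obtain ⟨c, ⟨a, ha', rfl⟩, rfl⟩ := hx
    exact dia_mono (bigOr_intro (List.mem_map_of_mem ha'))

lemma nf_exclMid (α : CForm) : Nf (exclMid α) :=
  ⟨[α, α.neg], by simp, iff_refl _⟩

lemma nf_dep (αs : List CForm) (β : CForm) : Nf (MTForm.dep αs β) := by
  apply nf_of_iff (MTThm.ax (.depAx αs β))
  refine nf_impl (nf_bigAnd _ ?_) (nf_exclMid β)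
  intro x hx
  simp only [List.mem_map] at hx
  obtain ⟨a, _, rfl⟩ := hx
  exact nf_exclMid a

lemma nf_all : ∀ φ : MTForm, Nf φ := by
  intro φ
  induction φ with
  | var p => exact ⟨[CForm.var p], by simp, iff_refl _⟩
  | bot => exact ⟨[CForm.bot], by simp, iff_refl _⟩
  | dep αs β => exact nf_dep αs β
  | and φ ψ ih1 ih2 => exact nf_and ih1 ih2
  | tensor φ ψ ih1 ih2 => exact nf_tensor ih1 ih2
  | or φ ψ ih1 ih2 => exact nf_or ih1 ih2
  | impl φ ψ ih1 ih2 => exact nf_impl ih1 ih2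
  | box φ ih => exact nf_box ih
  | dia φ ih => exact nf_dia ih

end NormalFormProof

/-- STATEMENT 7: Normal Form Theorem for MT₀: every formula is provably equivalent
to a nonempty intuitionistic disjunction of classical modal formulas. -/
theorem mt0_normal_form (φ : MTForm) :
    ∃ αs : List CForm, αs ≠ [] ∧ MTThm (φ.iff (bigOr (αs.map CForm.toMT))) := by
  exact nf_all φ
end

section
/- Completeness Theorem for the Hilbert system of MT₀: for all MT₀-formulas φ and ψ, if φ⊨ψ then φ⊢_{MT₀}ψ. -/
namespace MT

open MTForm

/-- Derivations from a list of assumptions, necessitation only on theorems. -/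
inductive DerC (Γ : List MTForm) : MTForm → Prop where
  | hyp {φ : MTForm} : φ ∈ Γ → DerC Γ φ
  | thm {φ : MTForm} : MTThm φ → DerC Γ φ
  | mp {φ ψ : MTForm} : DerC Γ (φ.impl ψ) → DerC Γ φ → DerC Γ ψ

theorem DerC.weaken {Γ Γ' : List MTForm} {φ : MTForm} (h : ∀ x ∈ Γ, x ∈ Γ') :
    DerC Γ φ → DerC Γ' φ := by
  intro d; induction d with
  | hyp h' => exact .hyp (h _ h')
  | thm t => exact .thm t
  | mp _ _ ih1 ih2 => exact .mp ih1 ih2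

theorem DerC.axm {Γ : List MTForm} {φ : MTForm} (h : MTAx φ) : DerC Γ φ := .thm (.ax h)

theorem thm_id (φ : MTForm) : MTThm (φ.impl φ) := by
  have h1 := MTThm.ax (MTAx.ipc2 φ (φ.impl φ) φ)
  have h2 := MTThm.ax (MTAx.ipc1 φ (φ.impl φ))
  have h3 := MTThm.ax (MTAx.ipc1 φ φ)
  exact (h1.mp h2).mp h3

theorem deduction {Γ : List MTForm} {φ ψ : MTForm} (d : DerC (φ :: Γ) ψ) :
    DerC Γ (φ.impl ψ) := by
  induction d with
  | @hyp χ h =>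
    rcases List.mem_cons.1 h with h | h
    · subst h; exact .thm (thm_id χ)
    · exact .mp (.axm (MTAx.ipc1 χ φ)) (.hyp h)
  | @thm χ t => exact .mp (.axm (MTAx.ipc1 χ φ)) (.thm t)
  | @mp χ θ _ _ ih1 ih2 =>
    exact .mp (.mp (.axm (MTAx.ipc2 φ χ θ)) ih1) ih2

theorem DerC.undeduce {Γ : List MTForm} {φ ψ : MTForm} (d : DerC Γ (φ.impl ψ)) :
    DerC (φ :: Γ) ψ :=
  .mp (d.weaken (fun x hx => List.mem_cons_of_mem _ hx)) (.hyp (List.mem_cons_self))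

theorem DerC.toThm {φ : MTForm} (d : DerC [] φ) : MTThm φ := by
  induction d with
  | hyp h => simp at h
  | thm t => exact t
  | mp _ _ ih1 ih2 => exact ih1.mp ih2

theorem thm_of_der {φ ψ : MTForm} (d : DerC [φ] ψ) : MTThm (φ.impl ψ) :=
  (deduction d).toThm

theorem der_of_thm {φ ψ : MTForm} (t : MTThm (φ.impl ψ)) : DerC [φ] ψ :=
  DerC.mp (.thm t) (.hyp (by simp))

/-- hypothesis access helpers -/
theorem DerC.h0 {Γ : List MTForm} {φ : MTForm} : DerC (φ :: Γ) φ := .hyp (by simp)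
theorem DerC.h1 {Γ : List MTForm} {φ ψ : MTForm} : DerC (φ :: ψ :: Γ) ψ := .hyp (List.mem_cons_of_mem _ (by simp))
theorem DerC.h2 {Γ : List MTForm} {φ ψ χ : MTForm} : DerC (φ :: ψ :: χ :: Γ) χ := .hyp (List.mem_cons_of_mem _ (List.mem_cons_of_mem _ (by simp)))
theorem DerC.h3 {Γ : List MTForm} {φ ψ χ θ : MTForm} : DerC (φ :: ψ :: χ :: θ :: Γ) θ := .hyp (List.mem_cons_of_mem _ (List.mem_cons_of_mem _ (List.mem_cons_of_mem _ (by simp))))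

theorem DerC.push {Γ : List MTForm} {φ ψ : MTForm} (d : DerC Γ ψ) : DerC (φ :: Γ) ψ :=
  d.weaken (fun x hx => List.mem_cons_of_mem _ hx)

/-- natural-deduction style rules -/
theorem DerC.andI {Γ : List MTForm} {φ ψ : MTForm} (d1 : DerC Γ φ) (d2 : DerC Γ ψ) :
    DerC Γ (φ.and ψ) := .mp (.mp (.axm (MTAx.ipc4 φ ψ)) d1) d2
theorem DerC.andE1 {Γ : List MTForm} {φ ψ : MTForm} (d : DerC Γ (φ.and ψ)) : DerC Γ φ :=
  .mp (.axm (MTAx.ipc3a φ ψ)) d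
theorem DerC.andE2 {Γ : List MTForm} {φ ψ : MTForm} (d : DerC Γ (φ.and ψ)) : DerC Γ ψ :=
  .mp (.axm (MTAx.ipc3b φ ψ)) d
theorem DerC.orI1 {Γ : List MTForm} {φ : MTForm} (ψ : MTForm) (d : DerC Γ φ) : DerC Γ (φ.or ψ) :=
  .mp (.axm (MTAx.ipc5a φ ψ)) d
theorem DerC.orI2 {Γ : List MTForm} {ψ : MTForm} (φ : MTForm) (d : DerC Γ ψ) : DerC Γ (φ.or ψ) :=
  .mp (.axm (MTAx.ipc5b φ ψ)) d
theorem DerC.orE {Γ : List MTForm} {φ ψ χ : MTForm} (d : DerC Γ (φ.or ψ))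
    (d1 : DerC (φ :: Γ) χ) (d2 : DerC (ψ :: Γ) χ) : DerC Γ χ :=
  .mp (.mp (.mp (.axm (MTAx.ipc6 φ ψ χ)) (deduction d1)) (deduction d2)) d
theorem DerC.exfalso {Γ : List MTForm} (φ : MTForm) (d : DerC Γ MTForm.bot) : DerC Γ φ :=
  .mp (.axm (MTAx.ipc7 φ)) d

/-- theorem-level combinators -/
theorem thm_trans {φ ψ χ : MTForm} (t1 : MTThm (φ.impl ψ)) (t2 : MTThm (ψ.impl χ)) :
    MTThm (φ.impl χ) :=
  thm_of_der (.mp (.thm t2) (.mp (.thm t1) .h0))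

theorem thm_orE {φ ψ χ : MTForm} (t1 : MTThm (φ.impl χ)) (t2 : MTThm (ψ.impl χ)) :
    MTThm ((φ.or ψ).impl χ) :=
  ((MTThm.ax (MTAx.ipc6 φ ψ χ)).mp t1).mp t2

theorem thm_or_mono {φ ψ φ' ψ' : MTForm} (t1 : MTThm (φ.impl φ')) (t2 : MTThm (ψ.impl ψ')) :
    MTThm ((φ.or ψ).impl (φ'.or ψ')) :=
  thm_orE (thm_trans t1 (.ax (MTAx.ipc5a φ' ψ'))) (thm_trans t2 (.ax (MTAx.ipc5b φ' ψ')))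

theorem thm_tensor_mono {φ ψ φ' ψ' : MTForm} (t1 : MTThm (φ.impl φ')) (t2 : MTThm (ψ.impl ψ')) :
    MTThm ((φ.tensor ψ).impl (φ'.tensor ψ')) :=
  ((MTThm.ax (MTAx.tensor3 φ ψ φ' ψ')).mp t1).mp t2

end MT

namespace MT

/-- Standard pointwise Kripke semantics for classical formulas. -/
def ksat (M : KModel) : M.W → CForm → Prop
  | w, .var p => w ∈ M.V p
  | _, .bot => False
  | w, .and α β => ksat M w α ∧ ksat M w β
  | w, .tensor α β => ksat M w α ∨ ksat M w β
  | w, .impl α β => ksat M w α → ksat M w β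
  | w, .box α => ∀ v, M.R w v → ksat M v α
  | w, .dia α => ∃ v, M.R w v ∧ ksat M v α

theorem csat_empty (M : KModel) (α : CForm) : M.csat ∅ α := by
  induction α with
  | var p => exact fun w h => absurd h (Set.notMem_empty w)
  | bot => rfl
  | and α β ih1 ih2 => exact ⟨ih1, ih2⟩
  | tensor α β ih1 ih2 => exact ⟨∅, ∅, by simp, ih1, ih2⟩
  | impl α β ih1 ih2 =>
    intro Y hY _; rw [Set.subset_empty_iff] at hY; subst hY; exact ih2
  | box α ih =>
    show M.csat (M.img ∅) α
    have : M.img ∅ = ∅ := by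
      ext w; simp [KModel.img]
    rw [this]; exact ih
  | dia α ih =>
    exact ⟨∅, ⟨by intro w hw; exact absurd hw (Set.notMem_empty w),
      fun w hw => absurd hw (Set.notMem_empty w)⟩, ih⟩

theorem img_mono {M : KModel} {X Y : Set M.W} (h : X ⊆ Y) : M.img X ⊆ M.img Y :=
  fun w ⟨v, hv, hr⟩ => ⟨v, h hv, hr⟩

theorem img_union_pt {M : KModel} (X : Set M.W) :
    M.img X = ⋃ w ∈ X, M.img {w} := by
  ext u; simp [KModel.img]

theorem csat_forall_single {M : KModel} {α : CForm} {w : M.W} (h : M.csat {w} α) :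
    ∀ u ∈ ({w} : Set M.W), M.csat {u} α := by
  intro u hu; rw [Set.mem_singleton_iff.1 hu]; exact h

/-- Flatness of classical formulas. -/
theorem csat_flat (M : KModel) (α : CForm) (X : Set M.W) :
    M.csat X α ↔ ∀ w ∈ X, M.csat {w} α := by
  induction α generalizing X with
  | var p =>
    constructor
    · intro h w hw; exact fun u hu => h (by rcases hu with rfl; exact hw)
    · intro h w hw; exact h w hw rfl
  | bot =>
    show X = ∅ ↔ ∀ w ∈ X, ({w} : Set M.W) = ∅
    constructor
    · rintro rfl w hw; exact absurd hw (Set.notMem_empty w)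
    · intro h; ext w; simp only [Set.mem_empty_iff_false, iff_false]
      intro hw; exact absurd (h w hw) (Set.singleton_ne_empty w)
  | and α β ih1 ih2 =>
    show (M.csat X α ∧ M.csat X β) ↔ _
    rw [ih1, ih2]
    constructor
    · rintro ⟨h1, h2⟩ w hw; exact ⟨h1 w hw, h2 w hw⟩
    · intro h; exact ⟨fun w hw => (h w hw).1, fun w hw => (h w hw).2⟩
  | tensor α β ih1 ih2 =>
    constructor
    · rintro ⟨Y, Z, rfl, hY, hZ⟩ w hw
      rcases hw with hw | hw
      · exact ⟨{w}, ∅, by simp, (ih1 {w}).2 (csat_forall_single ((ih1 Y).1 hY w hw)), csat_empty M β⟩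
      · exact ⟨∅, {w}, by simp, csat_empty M α, (ih2 {w}).2 (csat_forall_single ((ih2 Z).1 hZ w hw))⟩
    · intro h
      refine ⟨{w ∈ X | M.csat {w} α}, {w ∈ X | ¬ M.csat {w} α}, ?_, ?_, ?_⟩
      · ext w; by_cases hc : M.csat {w} α <;> simp [hc]
      · exact (ih1 _).2 (fun w hw => hw.2)
      · refine (ih2 _).2 (fun w hw => ?_)
        rcases h w hw.1 with ⟨Y, Z, hYZ, hY, hZ⟩
        have hwYZ : w ∈ Y ∪ Z := by rw [← hYZ]; exact rfl
        have hYs : Y ⊆ {w} := by rw [hYZ]; exact Set.subset_union_left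
        have hZs : Z ⊆ {w} := by rw [hYZ]; exact Set.subset_union_right
        rcases hwYZ with hwY | hwZ
        · have : Y = {w} := Set.Subset.antisymm hYs (by simpa using hwY)
          exact absurd (this ▸ hY) hw.2
        · have : Z = {w} := Set.Subset.antisymm hZs (by simpa using hwZ)
          exact this ▸ hZ
  | impl α β ih1 ih2 =>
    constructor
    · intro h w hw Y hY hYa
      exact h Y (hY.trans (by simpa using hw)) hYa
    · intro h Y hY hYa
      refine (ih2 Y).2 (fun w hw => ?_)
      exact h w (hY hw) {w} (by rfl) ((ih1 {w}).2 (csat_forall_single ((ih1 Y).1 hYa w hw)))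
  | box α ih =>
    show M.csat (M.img X) α ↔ ∀ w ∈ X, M.csat (M.img {w}) α
    rw [ih]
    constructor
    · intro h w hw
      refine (ih _).2 (fun u hu => h u (img_mono (by simpa using hw) hu))
    · intro h u hu
      rcases hu with ⟨v, hv, hr⟩
      exact (ih _).1 (h v hv) u ⟨v, rfl, hr⟩
  | dia α ih =>
    constructor
    · rintro ⟨Y, ⟨hY1, hY2⟩, hYa⟩ w hw
      rcases hY2 w hw with ⟨u, hu, hr⟩
      exact ⟨{u}, ⟨by rintro x rfl; exact ⟨w, rfl, hr⟩, by rintro x rfl; exact ⟨u, rfl, hr⟩⟩,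
        (ih {u}).2 (csat_forall_single ((ih Y).1 hYa u hu))⟩
    · intro h
      choose Y hY hYa using h
      refine ⟨⋃ (w : X), Y w w.2, ⟨?_, ?_⟩, ?_⟩
      · rintro u hu
        rcases Set.mem_iUnion.1 hu with ⟨⟨w, hw⟩, hu'⟩
        rcases (hY w hw).1 hu' with ⟨v, hv, hr⟩
        exact ⟨w, hw, Set.mem_singleton_iff.1 hv ▸ hr⟩
      · intro w hw
        rcases (hY w hw).2 w rfl with ⟨u, hu, hr⟩
        exact ⟨u, Set.mem_iUnion.2 ⟨⟨w, hw⟩, hu⟩, hr⟩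
      · refine (ih _).2 (fun u hu => ?_)
        rcases Set.mem_iUnion.1 hu with ⟨⟨w, hw⟩, hu'⟩
        exact (ih _).1 (hYa w hw) u hu'

theorem csat_mono {M : KModel} {α : CForm} {X Y : Set M.W} (h : Y ⊆ X) :
    M.csat X α → M.csat Y α := by
  intro hX
  exact (csat_flat M α Y).2 (fun w hw => (csat_flat M α X).1 hX w (h hw))

/-- Singleton team semantics coincides with pointwise Kripke semantics. -/
theorem csat_singleton (M : KModel) (α : CForm) (w : M.W) :
    M.csat {w} α ↔ ksat M w α := by
  induction α generalizing w with
  | var p => simp [KModel.csat, ksat, Set.singleton_subset_iff]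
  | bot => simp [KModel.csat, ksat]
  | and α β ih1 ih2 => exact and_congr (ih1 w) (ih2 w)
  | tensor α β ih1 ih2 =>
    constructor
    · rintro ⟨Y, Z, hYZ, hY, hZ⟩
      have hwYZ : w ∈ Y ∪ Z := by rw [← hYZ]; rfl
      rcases hwYZ with hw | hw
      · exact Or.inl ((ih1 w).1 (csat_mono (by simpa using hw) hY))
      · exact Or.inr ((ih2 w).1 (csat_mono (by simpa using hw) hZ))
    · rintro (h | h)
      · exact ⟨{w}, ∅, by simp, (ih1 w).2 h, csat_empty M β⟩
      · exact ⟨∅, {w}, by simp, csat_empty M α, (ih2 w).2 h⟩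
  | impl α β ih1 ih2 =>
    constructor
    · intro h ha
      exact (ih2 w).1 (h {w} (by rfl) ((ih1 w).2 ha))
    · intro h Y hY hYa
      rcases Set.subset_singleton_iff_eq.1 hY with rfl | rfl
      · exact csat_empty M β
      · exact (ih2 w).2 (h ((ih1 w).1 hYa))
  | box α ih =>
    show M.csat (M.img {w}) α ↔ _
    rw [csat_flat]
    constructor
    · intro h v hr; exact (ih v).1 (h v ⟨w, rfl, hr⟩)
    · rintro h u ⟨v, rfl, hr⟩; exact (ih u).2 (h u hr)
  | dia α ih =>
    constructor
    · rintro ⟨Y, ⟨hY1, hY2⟩, hYa⟩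
      rcases hY2 w rfl with ⟨u, hu, hr⟩
      exact ⟨u, hr, (ih u).1 (csat_mono (by simpa using hu) hYa)⟩
    · rintro ⟨v, hr, hv⟩
      exact ⟨{v}, ⟨by rintro x rfl; exact ⟨w, rfl, hr⟩, by rintro x rfl; exact ⟨v, rfl, hr⟩⟩,
        (ih v).2 hv⟩

theorem sat_empty (M : KModel) (φ : MTForm) : M.sat ∅ φ := by
  induction φ with
  | var p => exact fun w h => absurd h (Set.notMem_empty w)
  | bot => rfl
  | dep αs β => intro w hw; exact absurd hw (Set.notMem_empty w)
  | and φ ψ ih1 ih2 => exact ⟨ih1, ih2⟩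
  | tensor φ ψ ih1 ih2 => exact ⟨∅, ∅, by simp, ih1, ih2⟩
  | or φ ψ ih1 _ => exact Or.inl ih1
  | impl φ ψ ih1 ih2 =>
    intro Y hY _; rw [Set.subset_empty_iff] at hY; subst hY; exact ih2
  | box φ ih =>
    show M.sat (M.img ∅) φ
    have : M.img ∅ = ∅ := by ext w; simp [KModel.img]
    rw [this]; exact ih
  | dia φ ih =>
    exact ⟨∅, ⟨fun w hw => absurd hw (Set.notMem_empty w),
      fun w hw => absurd hw (Set.notMem_empty w)⟩, ih⟩

/-- Downward closure of MT₀ formulas. -/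
theorem sat_mono {M : KModel} {φ : MTForm} {X Y : Set M.W} (h : Y ⊆ X) :
    M.sat X φ → M.sat Y φ := by
  induction φ generalizing X Y with
  | var p => exact fun hX => h.trans hX
  | bot => rintro rfl; exact Set.subset_empty_iff.1 h
  | dep αs β => exact fun hX w hw u hu => hX w (h hw) u (h hu)
  | and φ ψ ih1 ih2 => exact fun ⟨h1, h2⟩ => ⟨ih1 h h1, ih2 h h2⟩
  | tensor φ ψ ih1 ih2 =>
    rintro ⟨Z, W, rfl, hZ, hW⟩
    exact ⟨Z ∩ Y, W ∩ Y, by rw [← Set.union_inter_distrib_right]; exact (Set.inter_eq_right.2 h).symm,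
      ih1 Set.inter_subset_left hZ, ih2 Set.inter_subset_left hW⟩
  | or φ ψ ih1 ih2 => rintro (h1 | h1); exacts [Or.inl (ih1 h h1), Or.inr (ih2 h h1)]
  | impl φ ψ ih1 ih2 => exact fun hX Z hZ => hX Z (hZ.trans h)
  | box φ ih => exact fun hX => ih (img_mono h) hX
  | dia φ ih =>
    rintro ⟨Z, ⟨hZ1, hZ2⟩, hZφ⟩
    refine ⟨Z ∩ M.img Y, ⟨Set.inter_subset_right, fun w hw => ?_⟩, ih Set.inter_subset_left hZφ⟩
    rcases hZ2 w (h hw) with ⟨u, hu, hr⟩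
    exact ⟨u, ⟨hu, ⟨w, hw, hr⟩⟩, hr⟩

/-- Team semantics of embedded classical formulas. -/
theorem sat_toMT (M : KModel) (α : CForm) (X : Set M.W) :
    M.sat X α.toMT ↔ M.csat X α := by
  induction α generalizing X with
  | var p => exact Iff.rfl
  | bot => exact Iff.rfl
  | and α β ih1 ih2 => exact and_congr (ih1 X) (ih2 X)
  | tensor α β ih1 ih2 =>
    constructor
    · rintro ⟨Y, Z, rfl, hY, hZ⟩; exact ⟨Y, Z, rfl, (ih1 Y).1 hY, (ih2 Z).1 hZ⟩
    · rintro ⟨Y, Z, rfl, hY, hZ⟩; exact ⟨Y, Z, rfl, (ih1 Y).2 hY, (ih2 Z).2 hZ⟩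
  | impl α β ih1 ih2 =>
    constructor
    · intro h Y hY hYa; exact (ih2 Y).1 (h Y hY ((ih1 Y).2 hYa))
    · intro h Y hY hYa; exact (ih2 Y).2 (h Y hY ((ih1 Y).1 hYa))
  | box α ih => exact ih _
  | dia α ih =>
    constructor
    · rintro ⟨Y, hY, hYa⟩; exact ⟨Y, hY, (ih Y).1 hYa⟩
    · rintro ⟨Y, hY, hYa⟩; exact ⟨Y, hY, (ih Y).2 hYa⟩

theorem bigAnd_sat (M : KModel) (L : List MTForm) (X : Set M.W) :
    M.sat X (bigAnd L) ↔ ∀ φ ∈ L, M.sat X φ := by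
  induction L with
  | nil =>
    simp only [List.not_mem_nil, false_implies, implies_true, iff_true, bigAnd]
    exact fun Y _ h => h
  | cons φ L ih =>
    cases L with
    | nil => simp [bigAnd]
    | cons ψ L' =>
      show M.sat X φ ∧ M.sat X (bigAnd (ψ :: L')) ↔ _
      rw [ih]; simp

end MT

namespace MT

theorem sat_toMT_iff {M : KModel} {α : CForm} {X : Set M.W} :
    M.sat X α.toMT ↔ ∀ w ∈ X, ksat M w α := by
  rw [sat_toMT, csat_flat]
  exact forall₂_congr (fun w _ => csat_singleton M α w)

theorem sat_mneg_iff {M : KModel} {α : CForm} {X : Set M.W} :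
    M.sat X (mneg α.toMT) ↔ ∀ w ∈ X, ¬ ksat M w α := by
  constructor
  · intro h w hw hk
    have h1 : M.sat {w} α.toMT := sat_toMT_iff.2 (fun u hu => by
      rw [Set.mem_singleton_iff.1 hu]; exact hk)
    have := h {w} (Set.singleton_subset_iff.2 hw) h1
    exact Set.singleton_ne_empty w this
  · intro h Y hY hYa
    show Y = ∅
    rw [Set.eq_empty_iff_forall_notMem]
    intro y hy
    exact h y (hY hy) (sat_toMT_iff.1 hYa y hy)

theorem ax_sound {φ : MTForm} (h : MTAx φ) (M : KModel) (X : Set M.W) : M.sat X φ := by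
  cases h with
  | ipc1 φ ψ =>
    intro Y _ h1 Z hZ _
    exact sat_mono hZ h1
  | ipc2 φ ψ χ =>
    intro Y _ h1 Z hZ h2 U hU hφ
    exact h1 U (hU.trans hZ) hφ U (subset_refl U) (h2 U hU hφ)
  | ipc3a φ ψ => exact fun Y _ h1 => h1.1
  | ipc3b φ ψ => exact fun Y _ h1 => h1.2
  | ipc4 φ χ =>
    intro Y _ h1 Z hZ h2
    exact ⟨sat_mono hZ h1, h2⟩
  | ipc5a φ ψ => exact fun Y _ h1 => Or.inl h1
  | ipc5b φ ψ => exact fun Y _ h1 => Or.inr h1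
  | ipc6 φ ψ χ =>
    intro Y _ h1 Z hZ h2 U hU h3
    rcases h3 with h3 | h3
    · exact h1 U (hU.trans hZ) h3
    · exact h2 U hU h3
  | ipc7 φ =>
    intro Y _ h1
    have : Y = ∅ := h1
    rw [this]; exact sat_empty M φ
  | split α φ ψ =>
    intro Y _ h1
    set Z := {w ∈ Y | ksat M w α} with hZ
    have hZY : Z ⊆ Y := fun w hw => hw.1
    have hZa : M.sat Z α.toMT := sat_toMT_iff.2 (fun w hw => hw.2)
    rcases h1 Z hZY hZa with h2 | h2
    · refine Or.inl (fun U hU hUa => ?_)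
      refine sat_mono (fun u hu => ?_) h2
      exact ⟨hU hu, sat_toMT_iff.1 hUa u hu⟩
    · refine Or.inr (fun U hU hUa => ?_)
      refine sat_mono (fun u hu => ?_) h2
      exact ⟨hU hu, sat_toMT_iff.1 hUa u hu⟩
  | dne α =>
    intro Y _ h1
    refine sat_toMT_iff.2 (fun w hw => ?_)
    by_contra hk
    have h2 : M.sat {w} (mneg α.toMT) := sat_mneg_iff.2 (fun u hu => by
      rw [Set.mem_singleton_iff.1 hu]; exact hk)
    exact Set.singleton_ne_empty w (h1 {w} (Set.singleton_subset_iff.2 hw) h2)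
  | kbox φ ψ =>
    intro Y _ h1 Z hZ h2
    exact h1 (M.img Z) (img_mono hZ) h2
  | kdia φ ψ =>
    intro Y _ h1 Z hZ h2
    rcases h2 with ⟨U, ⟨hU1, hU2⟩, hUφ⟩
    exact ⟨U, ⟨hU1, hU2⟩, h1 U (hU1.trans (img_mono hZ)) hUφ⟩
  | negDiaBot =>
    intro Y _ h1
    rcases h1 with ⟨Z, ⟨_, hZ2⟩, hZb⟩
    have : Z = ∅ := hZb
    subst this
    show Y = ∅
    rw [Set.eq_empty_iff_forall_notMem]
    intro y hy
    rcases hZ2 y hy with ⟨u, hu, _⟩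
    exact absurd hu (Set.notMem_empty u)
  | diaOr φ ψ =>
    intro Y _ h1
    rcases h1 with ⟨Z, hZ, h2 | h2⟩
    · exact Or.inl ⟨Z, hZ, h2⟩
    · exact Or.inr ⟨Z, hZ, h2⟩
  | fs φ ψ =>
    intro Y _ h1 Z hZ hZφ
    set Y' := {w ∈ Y | ∃ u ∈ Z, M.R w u} with hY'
    have hsucc : M.succT Y' Z := by
      constructor
      · intro u hu
        rcases hZ hu with ⟨w, hw, hr⟩
        exact ⟨w, ⟨hw, u, hu, hr⟩, hr⟩
      · exact fun w hw => hw.2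
    have h2 : M.sat Y' (MTForm.dia φ) := ⟨Z, hsucc, hZφ⟩
    have h3 : M.sat (M.img Y') ψ := h1 Y' (fun w hw => hw.1) h2
    exact sat_mono hsucc.1 h3
  | depAx αs β =>
    constructor
    · intro Y _ h1 Z hZ h3
      rw [bigAnd_sat] at h3
      have hag : ∀ α ∈ αs, ∀ w ∈ Z, ∀ u ∈ Z, (ksat M w α ↔ ksat M u α) := by
        intro α hα w hw u hu
        have := h3 (exclMid α) (List.mem_map_of_mem hα)
        rcases this with h4 | h4
        · exact iff_of_true (sat_toMT_iff.1 h4 w hw) (sat_toMT_iff.1 h4 u hu)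
        · exact iff_of_false (sat_mneg_iff.1 h4 w hw) (sat_mneg_iff.1 h4 u hu)
      rcases Set.eq_empty_or_nonempty Z with rfl | ⟨w₀, hw₀⟩
      · exact Or.inl (sat_empty M _)
      have hagree : ∀ w ∈ Z, (ksat M w β ↔ ksat M w₀ β) := by
        intro w hw
        have := h1 w (hZ hw) w₀ (hZ hw₀) (fun α hα => by
          rw [csat_singleton, csat_singleton]; exact hag α hα w hw w₀ hw₀)
        rw [csat_singleton, csat_singleton] at this; exact this
      by_cases hk : ksat M w₀ β
      · exact Or.inl (sat_toMT_iff.2 (fun w hw => (hagree w hw).2 hk))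
      · exact Or.inr (sat_mneg_iff.2 (fun w hw => fun hkk => hk ((hagree w hw).1 hkk)))
    · intro Y hY h1 w hw u hu hag
      have hwu : ({w, u} : Set M.W) ⊆ Y := by
        intro x hx; rcases hx with rfl | hx
        · exact hw
        · rw [Set.mem_singleton_iff.1 hx]; exact hu
      have h2 : M.sat {w, u} (bigAnd (αs.map exclMid)) := by
        rw [bigAnd_sat]
        intro χ hχ
        rcases List.mem_map.1 hχ with ⟨α, hα, rfl⟩
        have := hag α hα
        rw [csat_singleton, csat_singleton] at this
        by_cases hk : ksat M w α
        · refine Or.inl (sat_toMT_iff.2 (fun x hx => ?_))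
          rcases hx with rfl | hx
          · exact hk
          · rw [Set.mem_singleton_iff.1 hx]; exact this.1 hk
        · refine Or.inr (sat_mneg_iff.2 (fun x hx => ?_))
          rcases hx with rfl | hx
          · exact hk
          · rw [Set.mem_singleton_iff.1 hx]; exact fun hkk => hk (this.2 hkk)
      have h3 := h1 {w, u} hwu h2
      rw [csat_singleton, csat_singleton]
      rcases h3 with h4 | h4
      · exact iff_of_true (sat_toMT_iff.1 h4 w (by simp)) (sat_toMT_iff.1 h4 u (by simp))
      · exact iff_of_false (sat_mneg_iff.1 h4 w (by simp)) (sat_mneg_iff.1 h4 u (by simp))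
  | tensor1 φ ψ =>
    intro Y _ h1
    exact ⟨Y, ∅, by simp, h1, sat_empty M ψ⟩
  | tensor2 φ ψ α =>
    intro Y _ h1 Z hZ h2 U hU h3
    rcases h3 with ⟨V, W, rfl, hV, hW⟩
    have hVα := h1 V ((Set.subset_union_left.trans hU).trans hZ) hV
    have hWα := h2 W (Set.subset_union_right.trans hU) hW
    refine sat_toMT_iff.2 (fun w hw => ?_)
    rcases hw with hw | hw
    · exact sat_toMT_iff.1 hVα w hw
    · exact sat_toMT_iff.1 hWα w hw
  | tensor3 φ ψ χ θ =>
    intro Y _ h1 Z hZ h2 U hU h3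
    rcases h3 with ⟨V, W, rfl, hV, hW⟩
    exact ⟨V, W, rfl, h1 V ((Set.subset_union_left.trans hU).trans hZ) hV,
      h2 W (Set.subset_union_right.trans hU) hW⟩
  | tensorComm φ ψ =>
    intro Y _ h1
    rcases h1 with ⟨V, W, rfl, hV, hW⟩
    exact ⟨W, V, Set.union_comm V W, hW, hV⟩
  | tensorAssoc φ ψ χ =>
    intro Y _ h1
    rcases h1 with ⟨V, W, rfl, hV, hW⟩
    rcases hW with ⟨U, T, rfl, hU, hT⟩
    exact ⟨V ∪ U, T, (Set.union_assoc V U T).symm, ⟨V, U, rfl, hV, hU⟩, hT⟩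
  | tensorOr φ ψ χ =>
    intro Y _ h1
    rcases h1 with ⟨V, W, rfl, hV, hW | hW⟩
    · exact Or.inl ⟨V, W, rfl, hV, hW⟩
    · exact Or.inr ⟨V, W, rfl, hV, hW⟩
  | boxDiaNeg α =>
    intro Y _ h1
    have hpt : ∀ w ∈ Y, ∃ v, M.R w v ∧ ¬ ksat M v α := by
      intro w hw
      by_contra hc
      push_neg at hc
      have hbox : M.sat {w} (MTForm.box α.toMT) := by
        show M.sat (M.img {w}) α.toMT
        refine sat_toMT_iff.2 (fun v hv => ?_)
        rcases hv with ⟨x, hx, hr⟩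
        rw [Set.mem_singleton_iff.1 hx] at hr
        exact hc v hr
      exact Set.singleton_ne_empty w (h1 {w} (Set.singleton_subset_iff.2 hw) hbox)
    refine ⟨{v ∈ M.img Y | ¬ ksat M v α}, ⟨fun v hv => hv.1, fun w hw => ?_⟩, ?_⟩
    · rcases hpt w hw with ⟨v, hr, hk⟩
      exact ⟨v, ⟨⟨w, hw, hr⟩, hk⟩, hr⟩
    · exact sat_mneg_iff.2 (fun v hv => hv.2)
  | boxOr φ ψ =>
    intro Y _ h1
    rcases h1 with h1 | h1
    · exact Or.inl h1
    · exact Or.inr h1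

theorem thm_sound {φ : MTForm} (h : MTThm φ) : ∀ (M : KModel) (X : Set M.W), M.sat X φ := by
  induction h with
  | ax a => exact fun M X => ax_sound a M X
  | mp _ _ ih1 ih2 => exact fun M X => ih1 M X X (subset_refl X) (ih2 M X)
  | nec _ ih => exact fun M X => ih M (M.img X)

end MT

namespace MT

/-! ### Consistency, maximal consistent sets -/

def ctx (L : List CForm) : List MTForm := L.map CForm.toMT

def Incon (S : Set CForm) : Prop :=
  ∃ L : List CForm, (∀ γ ∈ L, γ ∈ S) ∧ DerC (ctx L) MTForm.bot

def Con (S : Set CForm) : Prop := ¬ Incon S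

def MCS (S : Set CForm) : Prop := Con S ∧ ∀ T, Con T → S ⊆ T → T = S

theorem DerC.weaken_ctx {L L' : List CForm} (h : ∀ γ ∈ L, γ ∈ L') {φ : MTForm}
    (d : DerC (ctx L) φ) : DerC (ctx L') φ :=
  d.weaken (fun x hx => by
    rcases List.mem_map.1 hx with ⟨γ, hγ, rfl⟩
    exact List.mem_map_of_mem (h γ hγ))

theorem split_insert {α : CForm} {S : Set CForm} :
    ∀ L' : List CForm, (∀ γ ∈ L', γ ∈ insert α S) →
      ∃ L : List CForm, (∀ γ ∈ L, γ ∈ S) ∧ (∀ γ ∈ L', γ = α ∨ γ ∈ L) := by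
  intro L'
  induction L' with
  | nil => exact fun _ => ⟨[], by simp, by simp⟩
  | cons γ L'' ih =>
    intro h
    rcases ih (fun x hx => h x (List.mem_cons_of_mem _ hx)) with ⟨L, hL1, hL2⟩
    rcases h γ (List.mem_cons_self) with rfl | hγS
    · exact ⟨L, hL1, by
        intro x hx
        rcases List.mem_cons.1 hx with rfl | hx
        · exact Or.inl rfl
        · exact hL2 x hx⟩
    · refine ⟨γ :: L, ?_, ?_⟩
      · intro x hx
        rcases List.mem_cons.1 hx with rfl | hx
        · exact hγS
        · exact hL1 x hx
      · intro x hx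
        rcases List.mem_cons.1 hx with rfl | hx
        · exact Or.inr (List.mem_cons_self)
        · rcases hL2 x hx with h' | h'
          · exact Or.inl h'
          · exact Or.inr (List.mem_cons_of_mem _ h')

theorem incon_insert {α : CForm} {S : Set CForm} (h : Incon (insert α S)) :
    ∃ L : List CForm, (∀ γ ∈ L, γ ∈ S) ∧ DerC (ctx L) (mneg α.toMT) := by
  rcases h with ⟨L', hL', d⟩
  rcases split_insert L' hL' with ⟨L, hL1, hL2⟩
  refine ⟨L, hL1, deduction (d.weaken ?_)⟩
  intro x hx
  rcases List.mem_map.1 hx with ⟨γ, hγ, rfl⟩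
  rcases hL2 γ hγ with rfl | h'
  · exact List.mem_cons_self
  · exact List.mem_cons_of_mem _ (List.mem_map_of_mem h')

theorem con_insert_of_der {S : Set CForm} (hS : Con S) {α : CForm}
    {L₀ : List CForm} (hL₀ : ∀ γ ∈ L₀, γ ∈ S) (d : DerC (ctx L₀) α.toMT) :
    Con (insert α S) := by
  intro hinc
  rcases incon_insert hinc with ⟨L, hL, d'⟩
  refine hS ⟨L₀ ++ L, ?_, ?_⟩
  · intro γ hγ
    rcases List.mem_append.1 hγ with h | h
    · exact hL₀ γ h
    · exact hL γ h
  · have e : ctx (L₀ ++ L) = ctx L₀ ++ ctx L := List.map_append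
    rw [e]
    exact DerC.mp (d'.weaken (fun x hx => List.mem_append_right _ hx))
      (d.weaken (fun x hx => List.mem_append_left _ hx))

theorem mcs_closed {S : Set CForm} (hS : MCS S) {α : CForm}
    {L : List CForm} (hL : ∀ γ ∈ L, γ ∈ S) (d : DerC (ctx L) α.toMT) : α ∈ S := by
  have h := hS.2 _ (con_insert_of_der hS.1 hL d) (Set.subset_insert _ _)
  rw [← h]; exact Set.mem_insert _ _

theorem mcs_mem (hS : MCS S) {α : CForm} (h : α ∈ S) : True := trivial

theorem mcs_closed1 {S : Set CForm} (hS : MCS S) {α β : CForm} (hα : α ∈ S)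
    (t : MTThm (α.toMT.impl β.toMT)) : β ∈ S :=
  mcs_closed hS (L := [α]) (by simpa using hα) (.mp (.thm t) (.hyp (by simp [ctx])))

theorem mcs_closed2 {S : Set CForm} (hS : MCS S) {α β γ : CForm} (hα : α ∈ S) (hβ : β ∈ S)
    (t : MTThm (α.toMT.impl (β.toMT.impl γ.toMT))) : γ ∈ S := by
  refine mcs_closed hS (L := [α, β]) ?_ ?_
  · intro x hx; rcases List.mem_cons.1 hx with rfl | hx
    · exact hα
    · simp at hx; rw [hx]; exact hβ
  · have h0 : DerC (ctx [α, β]) α.toMT := .hyp (by simp [ctx])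
    have h1 : DerC (ctx [α, β]) β.toMT := .hyp (by simp [ctx])
    exact .mp (.mp (.thm t) h0) h1

theorem mcs_not_both {S : Set CForm} (hS : MCS S) {α : CForm}
    (h1 : α ∈ S) (h2 : α.neg ∈ S) : False := by
  refine hS.1 ⟨[α.neg, α], ?_, ?_⟩
  · intro x hx; rcases List.mem_cons.1 hx with rfl | hx
    · exact h2
    · simp at hx; rw [hx]; exact h1
  · have h0 : DerC (ctx [α.neg, α]) (α.toMT.impl .bot) := .hyp (by simp [ctx, CForm.neg, CForm.toMT])
    have hα : DerC (ctx [α.neg, α]) α.toMT := .hyp (by simp [ctx])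
    exact .mp h0 hα

theorem mcs_mem_or_neg {S : Set CForm} (hS : MCS S) (α : CForm) : α ∈ S ∨ α.neg ∈ S := by
  by_contra hc
  push_neg at hc
  have hcon : Con (insert α S) ∨ Con (insert α.neg S) := by
    by_contra hc2
    push_neg at hc2
    rcases incon_insert (not_not.1 (fun h => hc2.1 h)) with ⟨L1, hL1, d1⟩
    rcases incon_insert (not_not.1 (fun h => hc2.2 h)) with ⟨L2, hL2, d2⟩
    refine hS.1 ⟨L1 ++ L2, ?_, ?_⟩
    · intro γ hγ
      rcases List.mem_append.1 hγ with h | h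
      · exact hL1 γ h
      · exact hL2 γ h
    · have e : ctx (L1 ++ L2) = ctx L1 ++ ctx L2 := List.map_append
      rw [e]
      have d1' : DerC (ctx L1 ++ ctx L2) (mneg α.toMT) :=
        d1.weaken (fun x hx => List.mem_append_left _ hx)
      have d2' : DerC (ctx L1 ++ ctx L2) (mneg (mneg α.toMT)) := by
        have : (CForm.neg α).toMT = mneg α.toMT := rfl
        exact this ▸ d2.weaken (fun x hx => List.mem_append_right _ hx)
      exact .mp d2' d1'
  rcases hcon with h | h
  · have := hS.2 _ h (Set.subset_insert _ _)
    exact hc.1 (this ▸ Set.mem_insert _ _)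
  · have := hS.2 _ h (Set.subset_insert _ _)
    exact hc.2 (this ▸ Set.mem_insert _ _)

theorem mcs_bot_not_mem {S : Set CForm} (hS : MCS S) : CForm.bot ∉ S := by
  intro h
  exact hS.1 ⟨[.bot], by simpa using h, .hyp (by simp [ctx, CForm.toMT])⟩

/-! ### Lindenbaum -/

theorem lindenbaum {S : Set CForm} (h : Con S) : ∃ T, S ⊆ T ∧ MCS T := by
  have hz := zorn_subset_nonempty {T : Set CForm | Con T} ?_ S h
  · rcases hz with ⟨T, hST, hmax⟩
    refine ⟨T, hST, hmax.1, fun U hU hTU => ?_⟩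
    exact Set.Subset.antisymm (hmax.2 hU hTU) hTU
  · intro c hc hchain hcne
    refine ⟨⋃₀ c, ?_, fun s hs => Set.subset_sUnion_of_mem hs⟩
    intro hinc
    rcases hinc with ⟨L, hL, d⟩
    have hone : ∃ T ∈ c, ∀ γ ∈ L, γ ∈ T := by
      clear d
      induction L with
      | nil => rcases hcne with ⟨T, hT⟩; exact ⟨T, hT, by simp⟩
      | cons γ L' ih =>
        rcases ih (fun x hx => hL x (List.mem_cons_of_mem _ hx)) with ⟨T, hTc, hT⟩
        rcases hL γ (List.mem_cons_self) with ⟨T', hT'c, hγT'⟩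
        rcases eq_or_ne T T' with rfl | hne
        · exact ⟨T, hTc, fun x hx => by
            rcases List.mem_cons.1 hx with rfl | hx
            · exact hγT'
            · exact hT x hx⟩
        · rcases hchain hTc hT'c hne with hsub | hsub
          · exact ⟨T', hT'c, fun x hx => by
              rcases List.mem_cons.1 hx with rfl | hx
              · exact hγT'
              · exact hsub (hT x hx)⟩
          · exact ⟨T, hTc, fun x hx => by
              rcases List.mem_cons.1 hx with rfl | hx
              · exact hsub hγT'
              · exact hT x hx⟩
    rcases hone with ⟨T, hTc, hT⟩
    exact hc hTc ⟨L, hT, d⟩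

end MT

namespace MT

/-! ### bigAnd and box syntactic lemmas -/

theorem thm_bigAnd_mem {Γ : List MTForm} {φ : MTForm} (h : φ ∈ Γ) :
    MTThm ((bigAnd Γ).impl φ) := by
  induction Γ with
  | nil => simp at h
  | cons ψ Γ' ih =>
    cases Γ' with
    | nil =>
      simp at h; rw [h]
      exact thm_id _
    | cons χ Γ'' =>
      rcases List.mem_cons.1 h with rfl | h'
      · exact .ax (MTAx.ipc3a _ _)
      · exact thm_trans (.ax (MTAx.ipc3b _ _)) (ih h')

theorem DerC.bigAndI {Γ : List MTForm} {L : List MTForm}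
    (h : ∀ φ ∈ L, DerC Γ φ) : DerC Γ (bigAnd L) := by
  induction L with
  | nil => exact .thm (thm_id _)
  | cons ψ L' ih =>
    cases L' with
    | nil => exact h ψ (by simp)
    | cons χ L'' =>
      exact .andI (h ψ (by simp))
        (ih (fun φ hφ => h φ (List.mem_cons_of_mem _ hφ)))

theorem derC_bigAnd_thm {Γ : List MTForm} {χ : MTForm} (d : DerC Γ χ) :
    MTThm ((bigAnd Γ).impl χ) := by
  have : DerC [bigAnd Γ] χ := by
    induction d with
    | hyp h => exact der_of_thm (thm_bigAnd_mem h)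
    | thm t => exact .thm t
    | mp _ _ ih1 ih2 => exact .mp ih1 ih2
  exact thm_of_der this

theorem thm_boxPair (φ χ : MTForm) :
    MTThm ((MTForm.box φ).impl ((MTForm.box χ).impl (MTForm.box (φ.and χ)))) := by
  have t1 : MTThm (MTForm.box (φ.impl (χ.impl (φ.and χ)))) := .nec (.ax (MTAx.ipc4 φ χ))
  have t2 : MTThm ((MTForm.box φ).impl (MTForm.box (χ.impl (φ.and χ)))) :=
    (MTThm.ax (MTAx.kbox _ _)).mp t1
  refine thm_of_der (deduction ?_)
  -- context [box χ, box φ]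
  have h1 : DerC [MTForm.box χ, MTForm.box φ] (MTForm.box (χ.impl (φ.and χ))) :=
    .mp (.thm t2) .h1
  exact .mp (.mp (.axm (MTAx.kbox χ (φ.and χ))) h1) .h0

theorem thm_boxAnd (L : List MTForm) :
    MTThm ((bigAnd (L.map .box)).impl (MTForm.box (bigAnd L))) := by
  induction L with
  | nil =>
    exact .mp (.ax (MTAx.ipc1 _ _)) (.nec (thm_id _))
  | cons φ L' ih =>
    cases L' with
    | nil => exact thm_id _
    | cons χ L'' =>
      refine thm_of_der ?_
      have h0 : DerC [bigAnd ((φ :: χ :: L'').map .box)] (bigAnd ((φ :: χ :: L'').map .box)) := .h0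
      have ha : DerC [bigAnd ((φ :: χ :: L'').map .box)] (MTForm.box φ) := h0.andE1
      have hb : DerC [bigAnd ((φ :: χ :: L'').map .box)] (MTForm.box (bigAnd (χ :: L''))) :=
        .mp (.thm ih) h0.andE2
      exact .mp (.mp (.thm (thm_boxPair _ _)) ha) hb

theorem ctx_box (L : List CForm) : ctx (L.map .box) = (ctx L).map .box := by
  simp [ctx, List.map_map]
  exact fun a _ => rfl

/-! ### Existence lemma -/

theorem exists_succ {Γ : Set CForm} (hΓ : MCS Γ) {α : CForm} (hd : CForm.dia α ∈ Γ) :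
    ∃ Δ, MCS Δ ∧ (∀ β, CForm.box β ∈ Γ → β ∈ Δ) ∧ α ∈ Δ := by
  have hcon : Con (insert α {β | CForm.box β ∈ Γ}) := by
    intro hinc
    rcases incon_insert hinc with ⟨L, hL, d⟩
    -- d : DerC (ctx L) (mneg α.toMT), with box γ ∈ Γ for γ ∈ L
    have t1 : MTThm ((bigAnd (ctx L)).impl (mneg α.toMT)) := derC_bigAnd_thm d
    have t2 : MTThm ((MTForm.box (bigAnd (ctx L))).impl (MTForm.box (mneg α.toMT))) :=
      (MTThm.ax (MTAx.kbox _ _)).mp (.nec t1)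
    refine hΓ.1 ⟨(L.map .box) ++ [.dia α], ?_, ?_⟩
    · intro γ hγ
      rcases List.mem_append.1 hγ with h | h
      · rcases List.mem_map.1 h with ⟨γ', hγ', rfl⟩
        exact hL γ' hγ'
      · simp at h; rw [h]; exact hd
    · have e : ctx ((L.map .box) ++ [.dia α]) = ctx (L.map .box) ++ [MTForm.dia α.toMT] := by
        simp [ctx]; rfl
      rw [e]
      set Δ' : List MTForm := ctx (L.map .box) ++ [MTForm.dia α.toMT] with hΔ'
      have d1 : DerC Δ' (bigAnd (ctx (L.map .box))) :=
        .bigAndI (fun ψ hψ => .hyp (List.mem_append_left _ hψ))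
      have d2 : DerC Δ' (MTForm.box (bigAnd (ctx L))) := by
        have := thm_boxAnd (ctx L)
        rw [← ctx_box] at this
        exact .mp (.thm this) d1
      have d3 : DerC Δ' (MTForm.box (mneg α.toMT)) := .mp (.thm t2) d2
      have d4 : DerC Δ' (MTForm.dia α.toMT) := .hyp (List.mem_append_right _ (by simp))
      have d5 : DerC Δ' (MTForm.dia .bot) :=
        .mp (.mp (.axm (MTAx.kdia α.toMT .bot)) d3) d4
      exact .mp (.axm MTAx.negDiaBot) d5
  rcases lindenbaum hcon with ⟨Δ, hsub, hΔ⟩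
  exact ⟨Δ, hΔ, fun β hβ => hsub (Set.mem_insert_of_mem _ hβ), hsub (Set.mem_insert _ _)⟩

/-! ### membership lemmas for connectives -/

theorem mcs_and_mem {S : Set CForm} (hS : MCS S) {α β : CForm} :
    α.and β ∈ S ↔ (α ∈ S ∧ β ∈ S) := by
  constructor
  · intro h
    exact ⟨mcs_closed1 hS h (.ax (MTAx.ipc3a α.toMT β.toMT)),
      mcs_closed1 hS h (.ax (MTAx.ipc3b α.toMT β.toMT))⟩
  · rintro ⟨h1, h2⟩
    exact mcs_closed2 hS h1 h2 (.ax (MTAx.ipc4 α.toMT β.toMT))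

theorem mcs_tensor_mem {S : Set CForm} (hS : MCS S) {α β : CForm} :
    α.tensor β ∈ S ↔ (α ∈ S ∨ β ∈ S) := by
  constructor
  · intro h
    by_contra hc
    push_neg at hc
    have hna : α.neg ∈ S := (mcs_mem_or_neg hS α).resolve_left hc.1
    have hnb : β.neg ∈ S := (mcs_mem_or_neg hS β).resolve_left hc.2
    have t : MTThm ((mneg α.toMT).impl ((mneg β.toMT).impl
        ((α.toMT.tensor β.toMT).impl MTForm.bot))) := .ax (MTAx.tensor2 α.toMT β.toMT .bot)
    have hbot : CForm.bot ∈ S := by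
      refine mcs_closed hS (L := [α.neg, β.neg, α.tensor β]) ?_ ?_
      · intro x hx
        rcases List.mem_cons.1 hx with rfl | hx
        · exact hna
        rcases List.mem_cons.1 hx with rfl | hx
        · exact hnb
        · simp at hx; rw [hx]; exact h
      · have e0 : DerC (ctx [α.neg, β.neg, α.tensor β]) (mneg α.toMT) := .hyp (by simp [ctx]; exact Or.inl rfl)
        have e1 : DerC (ctx [α.neg, β.neg, α.tensor β]) (mneg β.toMT) := .hyp (by simp [ctx]; exact Or.inr (Or.inl rfl))
        have e2 : DerC (ctx [α.neg, β.neg, α.tensor β]) (α.toMT.tensor β.toMT) := .hyp (by simp [ctx]; exact Or.inr (Or.inr rfl))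
        exact .mp (.mp (.mp (.thm t) e0) e1) e2
    exact mcs_bot_not_mem hS hbot
  · rintro (h | h)
    · exact mcs_closed1 hS h (.ax (MTAx.tensor1 α.toMT β.toMT))
    · exact mcs_closed1 hS h
        (thm_trans (.ax (MTAx.tensor1 β.toMT α.toMT)) (.ax (MTAx.tensorComm β.toMT α.toMT)))

theorem thm_negE (φ ψ : MTForm) : MTThm ((mneg φ).impl (φ.impl ψ)) :=
  thm_of_der (deduction (DerC.exfalso ψ (.mp .h1 .h0)))

theorem mcs_impl_mem {S : Set CForm} (hS : MCS S) {α β : CForm} :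
    α.impl β ∈ S ↔ (α ∈ S → β ∈ S) := by
  constructor
  · intro h hα
    exact mcs_closed2 hS h hα (thm_id _)
  · intro h
    rcases mcs_mem_or_neg hS α with hα | hα
    · exact mcs_closed1 hS (h hα) (.ax (MTAx.ipc1 β.toMT α.toMT))
    · exact mcs_closed1 hS hα (thm_negE α.toMT β.toMT)

/-! ### Canonical model -/

def canW : Type := {S : Set CForm // MCS S}

def canM (ne : Nonempty canW) : KModel where
  W := canW
  ne := ne
  R := fun Γ Δ => ∀ β, CForm.box β ∈ Γ.1 → β ∈ Δ.1
  V := fun p => {Γ : canW | CForm.var p ∈ Γ.1}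

theorem thm_negDia_boxNeg (α : CForm) :
    MTThm ((mneg (MTForm.dia α.toMT)).impl (MTForm.box (mneg α.toMT))) := by
  have inner : DerC [mneg (MTForm.dia α.toMT)] ((MTForm.dia α.toMT).impl (MTForm.box .bot)) :=
    deduction (DerC.exfalso (MTForm.box .bot) (.mp .h1 .h0))
  exact thm_of_der (.mp (.axm (MTAx.fs α.toMT .bot)) inner)

theorem truth_lemma (ne : Nonempty canW) (α : CForm) :
    ∀ Γ : canW, ksat (canM ne) Γ α ↔ α ∈ Γ.1 := by
  induction α with
  | var p => exact fun Γ => Iff.rfl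
  | bot => exact fun Γ => iff_of_false (fun h => h) (mcs_bot_not_mem Γ.2)
  | and α β ih1 ih2 =>
    intro Γ
    rw [mcs_and_mem Γ.2]
    exact and_congr (ih1 Γ) (ih2 Γ)
  | tensor α β ih1 ih2 =>
    intro Γ
    rw [mcs_tensor_mem Γ.2]
    exact or_congr (ih1 Γ) (ih2 Γ)
  | impl α β ih1 ih2 =>
    intro Γ
    rw [mcs_impl_mem Γ.2]
    exact imp_congr (ih1 Γ) (ih2 Γ)
  | box α ih =>
    intro Γ
    constructor
    · intro h
      by_contra hbox
      have hneg : (CForm.box α).neg ∈ Γ.1 := (mcs_mem_or_neg Γ.2 _).resolve_left hbox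
      have hdia : CForm.dia α.neg ∈ Γ.1 := mcs_closed1 Γ.2 hneg (.ax (MTAx.boxDiaNeg α))
      rcases exists_succ Γ.2 hdia with ⟨Δ, hΔ, hR, hα⟩
      have : α ∈ Δ := (ih ⟨Δ, hΔ⟩).1 (h ⟨Δ, hΔ⟩ hR)
      exact mcs_not_both hΔ this hα
    · intro h Δ hR
      exact (ih Δ).2 (hR α h)
  | dia α ih =>
    intro Γ
    constructor
    · rintro ⟨Δ, hR, hk⟩
      by_contra hdia
      have hneg : (CForm.dia α).neg ∈ Γ.1 := (mcs_mem_or_neg Γ.2 _).resolve_left hdia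
      have hbox : CForm.box α.neg ∈ Γ.1 := mcs_closed1 Γ.2 hneg (thm_negDia_boxNeg α)
      have : α.neg ∈ Δ.1 := hR α.neg hbox
      exact mcs_not_both Δ.2 ((ih Δ).1 hk) this
    · intro h
      rcases exists_succ Γ.2 h with ⟨Δ, hΔ, hR, hα⟩
      exact ⟨⟨Δ, hΔ⟩, hR, (ih ⟨Δ, hΔ⟩).2 hα⟩

theorem not_thm_mcs {a b : CForm} (h : ¬ MTThm (a.toMT.impl b.toMT)) :
    ∃ S, MCS S ∧ a ∈ S ∧ b ∉ S := by
  have hcon : Con {a, b.neg} := by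
    intro hinc
    rcases hinc with ⟨L, hL, d⟩
    have d' : DerC [mneg b.toMT, a.toMT] MTForm.bot := by
      refine d.weaken ?_
      intro x hx
      rcases List.mem_map.1 hx with ⟨γ, hγ, rfl⟩
      rcases hL γ hγ with rfl | hγ'
      · exact List.mem_cons_of_mem _ (by simp)
      · rw [Set.mem_singleton_iff.1 hγ']
        exact List.mem_cons_self
    have d2 : DerC [a.toMT] (mneg (mneg b.toMT)) := deduction d'
    have d3 : DerC [a.toMT] b.toMT := .mp (.axm (MTAx.dne b)) d2
    exact h (thm_of_der d3)
  rcases lindenbaum hcon with ⟨S, hsub, hS⟩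
  refine ⟨S, hS, hsub (by simp), fun hb => ?_⟩
  exact mcs_not_both hS hb (hsub (by simp))

end MT

namespace MT

/-- Disjunction of a list of classical formulas (empty disjunction is ⊥). -/
def disj (l : List CForm) : MTForm := l.foldr (fun a ψ => (a.toMT).or ψ) MTForm.bot

theorem disj_cons (a : CForm) (l : List CForm) : disj (a :: l) = (a.toMT).or (disj l) := rfl

theorem thm_disj_mem {a : CForm} {l : List CForm} (h : a ∈ l) :
    MTThm (a.toMT.impl (disj l)) := by
  induction l with
  | nil => simp at h
  | cons b l' ih =>
    rcases List.mem_cons.1 h with rfl | h'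
    · exact .ax (MTAx.ipc5a _ _)
    · exact thm_trans (ih h') (.ax (MTAx.ipc5b _ _))

theorem thm_disj_elim {l : List CForm} {χ : MTForm}
    (h : ∀ a ∈ l, MTThm (a.toMT.impl χ)) : MTThm ((disj l).impl χ) := by
  induction l with
  | nil => exact .ax (MTAx.ipc7 χ)
  | cons b l' ih =>
    exact thm_orE (h b (by simp)) (ih (fun a ha => h a (List.mem_cons_of_mem _ ha)))

theorem disj_sat {M : KModel} {l : List CForm} {X : Set M.W} :
    M.sat X (disj l) ↔ (∃ a ∈ l, M.sat X a.toMT) ∨ X = ∅ := by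
  induction l with
  | nil =>
    show X = ∅ ↔ _
    simp
  | cons b l' ih =>
    show M.sat X b.toMT ∨ M.sat X (disj l') ↔ _
    rw [ih]
    constructor
    · rintro (h | (⟨a, ha, h⟩ | h))
      · exact Or.inl ⟨b, by simp, h⟩
      · exact Or.inl ⟨a, List.mem_cons_of_mem _ ha, h⟩
      · exact Or.inr h
    · rintro (⟨a, ha, h⟩ | h)
      · rcases List.mem_cons.1 ha with rfl | ha'
        · exact Or.inl h
        · exact Or.inr (Or.inl ⟨a, ha', h⟩)
      · exact Or.inr (Or.inr h)

/-- The key semantic-to-syntactic step for classical formulas, via the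
canonical model. -/
theorem classical_entails_disj {a : CForm} {m : List CForm}
    (h : MTEntails a.toMT (disj m)) : MTThm (a.toMT.impl (disj m)) := by
  by_cases hex : ∃ b ∈ (CForm.bot :: m), MTThm (a.toMT.impl b.toMT)
  · rcases hex with ⟨b, hb, t⟩
    rcases List.mem_cons.1 hb with rfl | hb'
    · exact thm_trans t (.ax (MTAx.ipc7 (disj m)))
    · exact thm_trans t (thm_disj_mem hb')
  · push_neg at hex
    have hS : ∀ b ∈ (CForm.bot :: m), ∃ S, MCS S ∧ a ∈ S ∧ b ∉ S :=
      fun b hb => not_thm_mcs (hex b hb)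
    choose S hS1 hS2 hS3 using hS
    have hbm : CForm.bot ∈ (CForm.bot :: m) := by simp
    have ne : Nonempty canW := ⟨⟨S _ hbm, hS1 _ hbm⟩⟩
    set X : Set (canM ne).W := {Γ | ∃ b, ∃ hb : b ∈ (CForm.bot :: m), Γ.1 = S b hb} with hX
    have hsatA : (canM ne).sat X a.toMT := by
      refine sat_toMT_iff.2 (fun Γ hΓ => ?_)
      rcases hΓ with ⟨b, hb, hΓ1⟩
      refine (truth_lemma ne a Γ).2 ?_
      rw [hΓ1]
      exact hS2 b hb
    have hsatD := h (canM ne) X hsatA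
    rcases disj_sat.1 hsatD with ⟨b, hb, hsb⟩ | hXe
    · have hb' : b ∈ (CForm.bot :: m) := List.mem_cons_of_mem _ hb
      have hΓ : (⟨S b hb', hS1 b hb'⟩ : canW) ∈ X := ⟨b, hb', rfl⟩
      have hk := sat_toMT_iff.1 hsb _ hΓ
      have := (truth_lemma ne b _).1 hk
      exact absurd this (hS3 b hb')
    · have hΓ : (⟨S _ hbm, hS1 _ hbm⟩ : canW) ∈ X := ⟨_, hbm, rfl⟩
      rw [hXe] at hΓ
      exact absurd hΓ (Set.notMem_empty _)

end MT

namespace MT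

/-! ### monotonicity combinators -/

theorem thm_and_mono {φ ψ φ' ψ' : MTForm} (t1 : MTThm (φ.impl φ')) (t2 : MTThm (ψ.impl ψ')) :
    MTThm ((φ.and ψ).impl (φ'.and ψ')) :=
  thm_of_der (DerC.andI (.mp (.thm t1) (DerC.h0.andE1)) (.mp (.thm t2) (DerC.h0.andE2)))

theorem thm_imp_mono {φ ψ φ' ψ' : MTForm} (t1 : MTThm (φ'.impl φ)) (t2 : MTThm (ψ.impl ψ')) :
    MTThm ((φ.impl ψ).impl (φ'.impl ψ')) :=
  thm_of_der (deduction (.mp (.thm t2) (.mp .h1 (.mp (.thm t1) .h0))))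

theorem thm_box_mono {φ ψ : MTForm} (t : MTThm (φ.impl ψ)) :
    MTThm ((MTForm.box φ).impl (MTForm.box ψ)) :=
  (MTThm.ax (MTAx.kbox φ ψ)).mp (.nec t)

theorem thm_dia_mono {φ ψ : MTForm} (t : MTThm (φ.impl ψ)) :
    MTThm ((MTForm.dia φ).impl (MTForm.dia ψ)) :=
  (MTThm.ax (MTAx.kdia φ ψ)).mp (.nec t)

theorem thm_and_or_distrib (φ ψ χ : MTForm) :
    MTThm ((φ.and (ψ.or χ)).impl ((φ.and ψ).or (φ.and χ))) :=
  thm_of_der (DerC.orE (DerC.h0.andE2)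
    (.orI1 _ (.andI (DerC.h1.andE1) .h0))
    (.orI2 _ (.andI (DerC.h1.andE1) .h0)))

theorem thm_or_tensor_distrib (φ ψ χ : MTForm) :
    MTThm (((φ.or ψ).tensor χ).impl ((φ.tensor χ).or (ψ.tensor χ))) := by
  have t1 : MTThm (((φ.or ψ).tensor χ).impl (χ.tensor (φ.or ψ))) := .ax (MTAx.tensorComm _ _)
  have t2 : MTThm ((χ.tensor (φ.or ψ)).impl ((χ.tensor φ).or (χ.tensor ψ))) :=
    .ax (MTAx.tensorOr _ _ _)
  have t3 : MTThm (((χ.tensor φ).or (χ.tensor ψ)).impl ((φ.tensor χ).or (ψ.tensor χ))) :=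
    thm_or_mono (.ax (MTAx.tensorComm _ _)) (.ax (MTAx.tensorComm _ _))
  exact thm_trans t1 (thm_trans t2 t3)

/-- equivNF φ n : φ is provably equivalent to the disjunction of n. -/
def equivNF (φ : MTForm) (n : List CForm) : Prop :=
  MTThm (φ.impl (disj n)) ∧ MTThm ((disj n).impl φ)

theorem nf_classical (a : CForm) : equivNF a.toMT [a] :=
  ⟨.ax (MTAx.ipc5a _ _), thm_orE (thm_id _) (.ax (MTAx.ipc7 _))⟩

theorem equivNF_congr {φ ψ : MTForm} {n : List CForm} (h : equivNF φ n)
    (t1 : MTThm (ψ.impl φ)) (t2 : MTThm (φ.impl ψ)) : equivNF ψ n :=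
  ⟨thm_trans t1 h.1, thm_trans h.2 t2⟩

theorem thm_disj_sub {l m : List CForm} (h : ∀ x ∈ l, x ∈ m) :
    MTThm ((disj l).impl (disj m)) :=
  thm_disj_elim (fun a ha => thm_disj_mem (h a ha))

theorem mem_one_cons {f : CForm → CForm} {t : List CForm} {x b : CForm} {m' : List CForm}
    (hx : x ∈ (m'.map f) ++ t) : x ∈ ((b :: m').map f) ++ t := by
  rcases List.mem_append.1 hx with h | h
  · rcases List.mem_map.1 h with ⟨c, hc, rfl⟩
    exact List.mem_append_left _ (List.mem_map_of_mem (List.mem_cons_of_mem _ hc))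
  · exact List.mem_append_right _ h

/-! ### and -/

def andOne (a : CForm) (m : List CForm) : List CForm := m.map (a.and ·)

theorem nf_andOne (a : CForm) (m : List CForm) :
    equivNF (a.toMT.and (disj m)) (andOne a m) := by
  induction m with
  | nil =>
    constructor
    · exact .ax (MTAx.ipc3b _ _)
    · exact .ax (MTAx.ipc7 _)
  | cons b m' ih =>
    constructor
    · have t1 := thm_and_or_distrib a.toMT b.toMT (disj m')
      have t2 : MTThm (((a.toMT.and b.toMT).or (a.toMT.and (disj m'))).impl
          (disj (andOne a (b :: m')))) :=
        thm_orE (thm_disj_mem (a := a.and b) (l := andOne a (b :: m')) (by simp [andOne]))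
          (thm_trans ih.1 (thm_disj_sub (fun x hx => by
            simp only [andOne] at hx ⊢
            rcases List.mem_map.1 hx with ⟨c, hc, rfl⟩
            exact List.mem_map_of_mem (List.mem_cons_of_mem _ hc))))
      exact thm_trans t1 t2
    · refine thm_orE ?_ ?_
      · exact thm_and_mono (thm_id _) (.ax (MTAx.ipc5a _ _))
      · exact thm_trans ih.2 (thm_and_mono (thm_id _) (.ax (MTAx.ipc5b _ _)))

def andNF : List CForm → List CForm → List CForm
  | [], _ => []
  | a :: l, m => andOne a m ++ andNF l m

theorem thm_disj_append_elim {l m : List CForm} {χ : MTForm}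
    (h1 : MTThm ((disj l).impl χ)) (h2 : MTThm ((disj m).impl χ)) :
    MTThm ((disj (l ++ m)).impl χ) := by
  refine thm_disj_elim (fun a ha => ?_)
  rcases List.mem_append.1 ha with h | h
  · exact thm_trans (thm_disj_mem h) h1
  · exact thm_trans (thm_disj_mem h) h2

theorem thm_disj_append1 (l m : List CForm) : MTThm ((disj l).impl (disj (l ++ m))) :=
  thm_disj_elim (fun a ha => thm_disj_mem (List.mem_append_left _ ha))

theorem thm_disj_append2 (l m : List CForm) : MTThm ((disj m).impl (disj (l ++ m))) :=
  thm_disj_elim (fun a ha => thm_disj_mem (List.mem_append_right _ ha))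

theorem nf_and_disj (l m : List CForm) :
    equivNF ((disj l).and (disj m)) (andNF l m) := by
  induction l with
  | nil =>
    constructor
    · exact .ax (MTAx.ipc3a _ _)
    · exact .ax (MTAx.ipc7 _)
  | cons a l' ih =>
    constructor
    · have t0 : MTThm (((disj (a :: l')).and (disj m)).impl
          ((disj m).and (disj (a :: l')))) :=
        thm_of_der (DerC.andI (DerC.h0.andE2) (DerC.h0.andE1))
      have t1 : MTThm (((disj m).and ((a.toMT).or (disj l'))).impl
          (((disj m).and a.toMT).or ((disj m).and (disj l')))) :=
        thm_and_or_distrib _ _ _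
      have tc : MTThm ((((disj m).and a.toMT).or ((disj m).and (disj l'))).impl
          ((a.toMT.and (disj m)).or ((disj l').and (disj m)))) :=
        thm_or_mono (thm_of_der (DerC.andI (DerC.h0.andE2) (DerC.h0.andE1)))
          (thm_of_der (DerC.andI (DerC.h0.andE2) (DerC.h0.andE1)))
      have t2 : MTThm (((a.toMT.and (disj m)).or ((disj l').and (disj m))).impl
          (disj (andNF (a :: l') m))) :=
        thm_orE (thm_trans (nf_andOne a m).1 (thm_disj_append1 (andOne a m) (andNF l' m)))
          (thm_trans ih.1 (thm_disj_append2 (andOne a m) (andNF l' m)))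
      exact thm_trans t0 (thm_trans t1 (thm_trans tc t2))
    · refine thm_disj_append_elim ?_ ?_
      · refine thm_trans (nf_andOne a m).2 ?_
        exact thm_and_mono (.ax (MTAx.ipc5a _ _)) (thm_id _)
      · refine thm_trans ih.2 ?_
        exact thm_and_mono (.ax (MTAx.ipc5b _ _)) (thm_id _)

theorem nf_and {φ ψ : MTForm} {n1 n2 : List CForm} (h1 : equivNF φ n1) (h2 : equivNF ψ n2) :
    equivNF (φ.and ψ) (andNF n1 n2) :=
  equivNF_congr (nf_and_disj n1 n2) (thm_and_mono h1.1 h2.1) (thm_and_mono h1.2 h2.2)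

/-! ### or -/

theorem nf_or {φ ψ : MTForm} {n1 n2 : List CForm} (h1 : equivNF φ n1) (h2 : equivNF ψ n2) :
    equivNF (φ.or ψ) (n1 ++ n2) := by
  constructor
  · exact thm_orE (thm_trans h1.1 (thm_disj_append1 _ _)) (thm_trans h2.1 (thm_disj_append2 _ _))
  · exact thm_disj_append_elim (thm_trans h1.2 (.ax (MTAx.ipc5a _ _)))
      (thm_trans h2.2 (.ax (MTAx.ipc5b _ _)))

/-! ### tensor -/

def tensorOne (a : CForm) (m : List CForm) : List CForm := m.map (a.tensor ·) ++ [a]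

theorem nf_tensorOne (a : CForm) (m : List CForm) :
    equivNF (a.toMT.tensor (disj m)) (tensorOne a m) := by
  induction m with
  | nil =>
    constructor
    · have tE : MTThm ((a.toMT.tensor MTForm.bot).impl a.toMT) :=
        ((MTThm.ax (MTAx.tensor2 a.toMT MTForm.bot a)).mp (thm_id _)).mp (.ax (MTAx.ipc7 _))
      exact thm_trans tE (.ax (MTAx.ipc5a _ _))
    · exact thm_orE (.ax (MTAx.tensor1 _ _)) (.ax (MTAx.ipc7 _))
  | cons b m' ih =>
    constructor
    · have t1 : MTThm ((a.toMT.tensor ((b.toMT).or (disj m'))).impl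
          ((a.toMT.tensor b.toMT).or (a.toMT.tensor (disj m')))) := .ax (MTAx.tensorOr _ _ _)
      refine thm_trans t1 (thm_orE
        (thm_disj_mem (a := a.tensor b) (l := tensorOne a (b :: m')) (by simp [tensorOne]))
        (thm_trans ih.1 ?_))
      exact thm_disj_sub (fun x hx => mem_one_cons hx)
    · refine thm_disj_elim (fun x hx => ?_)
      rcases List.mem_append.1 hx with h | h
      · rcases List.mem_map.1 h with ⟨b', hb', rfl⟩
        exact thm_tensor_mono (thm_id _) (thm_disj_mem hb')
      · simp at h; rw [h]
        exact .ax (MTAx.tensor1 _ _)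

def tensorNF : List CForm → List CForm → List CForm
  | [], m => tensorOne .bot m
  | a :: l, m => tensorOne a m ++ tensorNF l m

theorem nf_tensor_disj (l m : List CForm) :
    equivNF ((disj l).tensor (disj m)) (tensorNF l m) := by
  induction l with
  | nil => exact nf_tensorOne .bot m
  | cons a l' ih =>
    constructor
    · have t1 := thm_or_tensor_distrib a.toMT (disj l') (disj m)
      exact thm_trans t1 (thm_orE
        (thm_trans (nf_tensorOne a m).1 (thm_disj_append1 (tensorOne a m) (tensorNF l' m)))
        (thm_trans ih.1 (thm_disj_append2 (tensorOne a m) (tensorNF l' m))))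
    · refine thm_disj_append_elim ?_ ?_
      · exact thm_trans (nf_tensorOne a m).2
          (thm_tensor_mono (.ax (MTAx.ipc5a _ _)) (thm_id _))
      · exact thm_trans ih.2 (thm_tensor_mono (.ax (MTAx.ipc5b _ _)) (thm_id _))

theorem nf_tensor {φ ψ : MTForm} {n1 n2 : List CForm} (h1 : equivNF φ n1) (h2 : equivNF ψ n2) :
    equivNF (φ.tensor ψ) (tensorNF n1 n2) :=
  equivNF_congr (nf_tensor_disj n1 n2) (thm_tensor_mono h1.1 h2.1) (thm_tensor_mono h1.2 h2.2)

/-! ### impl -/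

def implOne (a : CForm) (m : List CForm) : List CForm := m.map (a.impl ·) ++ [a.neg]

theorem nf_implOne (a : CForm) (m : List CForm) :
    equivNF (a.toMT.impl (disj m)) (implOne a m) := by
  induction m with
  | nil =>
    constructor
    · exact .ax (MTAx.ipc5a _ _)
    · exact thm_orE (thm_id _) (.ax (MTAx.ipc7 _))
  | cons b m' ih =>
    constructor
    · have t1 : MTThm ((a.toMT.impl ((b.toMT).or (disj m'))).impl
          ((a.toMT.impl b.toMT).or (a.toMT.impl (disj m')))) := .ax (MTAx.split a _ _)
      refine thm_trans t1 (thm_orE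
        (thm_disj_mem (a := a.impl b) (l := implOne a (b :: m')) (by simp [implOne]))
        (thm_trans ih.1 ?_))
      exact thm_disj_sub (fun x hx => mem_one_cons hx)
    · refine thm_disj_elim (fun x hx => ?_)
      rcases List.mem_append.1 hx with h | h
      · rcases List.mem_map.1 h with ⟨b', hb', rfl⟩
        exact thm_imp_mono (thm_id _) (thm_disj_mem hb')
      · simp at h; rw [h]
        exact thm_imp_mono (thm_id _) (.ax (MTAx.ipc7 _))

def implNF : List CForm → List CForm → List CForm
  | [], _ => [CForm.bot.impl .bot]
  | a :: l, m => andNF (implOne a m) (implNF l m)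

theorem thm_or_imp (φ ψ χ : MTForm) :
    MTThm (((φ.or ψ).impl χ).impl ((φ.impl χ).and (ψ.impl χ))) ∧
    MTThm (((φ.impl χ).and (ψ.impl χ)).impl ((φ.or ψ).impl χ)) := by
  constructor
  · refine thm_of_der (DerC.andI (deduction ?_) (deduction ?_))
    · exact .mp .h1 (.orI1 _ .h0)
    · exact .mp .h1 (.orI2 _ .h0)
  · refine thm_of_der (deduction ?_)
    refine DerC.orE .h0 ?_ ?_
    · exact .mp (DerC.h2.andE1) .h0
    · exact .mp (DerC.h2.andE2) .h0

theorem nf_impl_disj (l m : List CForm) :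
    equivNF ((disj l).impl (disj m)) (implNF l m) := by
  induction l with
  | nil =>
    constructor
    · have htop : MTThm (disj [CForm.bot.impl .bot]) :=
        (MTThm.ax (MTAx.ipc5a _ _)).mp (thm_id MTForm.bot)
      exact (MTThm.ax (MTAx.ipc1 _ _)).mp htop
    · exact thm_orE ((MTThm.ax (MTAx.ipc1 _ _)).mp (.ax (MTAx.ipc7 _))) (.ax (MTAx.ipc7 _))
  | cons a l' ih =>
    have hsplit := thm_or_imp a.toMT (disj l') (disj m)
    have hand : equivNF ((a.toMT.impl (disj m)).and ((disj l').impl (disj m)))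
        (andNF (implOne a m) (implNF l' m)) :=
      nf_and (nf_implOne a m) ih
    exact ⟨thm_trans hsplit.1 hand.1, thm_trans hand.2 hsplit.2⟩

theorem nf_impl {φ ψ : MTForm} {n1 n2 : List CForm} (h1 : equivNF φ n1) (h2 : equivNF ψ n2) :
    equivNF (φ.impl ψ) (implNF n1 n2) :=
  equivNF_congr (nf_impl_disj n1 n2) (thm_imp_mono h1.2 h2.1) (thm_imp_mono h1.1 h2.2)

/-! ### box and dia -/

theorem nf_box_disj (l : List CForm) :
    equivNF (MTForm.box (disj l)) (l.map .box ++ [.box .bot]) := by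
  induction l with
  | nil =>
    constructor
    · exact .ax (MTAx.ipc5a _ _)
    · exact thm_orE (thm_id _) (.ax (MTAx.ipc7 _))
  | cons a l' ih =>
    constructor
    · have t1 : MTThm ((MTForm.box ((a.toMT).or (disj l'))).impl
          ((MTForm.box a.toMT).or (MTForm.box (disj l')))) := .ax (MTAx.boxOr _ _)
      exact thm_trans t1 (thm_orE
        (thm_disj_mem (a := CForm.box a) (l := (a :: l').map CForm.box ++ [CForm.bot.box]) (by simp))
        (thm_trans ih.1 (thm_disj_sub (fun x hx => mem_one_cons hx))))
    · refine thm_disj_elim (fun x hx => ?_)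
      rcases List.mem_append.1 hx with h | h
      · rcases List.mem_map.1 h with ⟨b, hb, rfl⟩
        exact thm_box_mono (thm_trans (nf_classical b).1 (thm_disj_elim
          (fun y hy => thm_disj_mem (by simp at hy; rw [hy]; exact hb))))
      · simp at h; rw [h]
        exact thm_box_mono (.ax (MTAx.ipc7 _))

theorem nf_box {φ : MTForm} {n : List CForm} (h : equivNF φ n) :
    equivNF (MTForm.box φ) (n.map .box ++ [.box .bot]) :=
  equivNF_congr (nf_box_disj n) (thm_box_mono h.1) (thm_box_mono h.2)

theorem nf_dia_disj (l : List CForm) :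
    equivNF (MTForm.dia (disj l)) (l.map .dia) := by
  induction l with
  | nil =>
    constructor
    · exact .ax MTAx.negDiaBot
    · exact .ax (MTAx.ipc7 _)
  | cons a l' ih =>
    constructor
    · have t1 : MTThm ((MTForm.dia ((a.toMT).or (disj l'))).impl
          ((MTForm.dia a.toMT).or (MTForm.dia (disj l')))) := .ax (MTAx.diaOr _ _)
      exact thm_trans t1 (thm_or_mono (thm_id _) ih.1)
    · refine thm_disj_elim (fun x hx => ?_)
      rcases List.mem_map.1 hx with ⟨b, hb, rfl⟩
      exact thm_dia_mono (thm_disj_mem hb)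

theorem nf_dia {φ : MTForm} {n : List CForm} (h : equivNF φ n) :
    equivNF (MTForm.dia φ) (n.map .dia) :=
  equivNF_congr (nf_dia_disj n) (thm_dia_mono h.1) (thm_dia_mono h.2)

/-! ### dep -/

theorem nf_exclMid (γ : CForm) : equivNF (exclMid γ) [γ, γ.neg] := by
  constructor
  · exact thm_or_mono (thm_id _) (.ax (MTAx.ipc5a _ _))
  · exact thm_or_mono (thm_id _) (thm_orE (thm_id _) (.ax (MTAx.ipc7 _)))

theorem nf_bigAnd : ∀ (L : List MTForm),
    (∀ φ ∈ L, ∃ n, equivNF φ n) → ∃ n, equivNF (bigAnd L) n := by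
  intro L
  induction L with
  | nil =>
    intro _
    refine ⟨[CForm.bot.impl .bot], ?_, ?_⟩
    · exact .ax (MTAx.ipc5a _ _)
    · exact thm_orE (thm_id _) (.ax (MTAx.ipc7 _))
  | cons φ L' ih =>
    intro h
    rcases h φ (by simp) with ⟨n1, hn1⟩
    rcases ih (fun ψ hψ => h ψ (List.mem_cons_of_mem _ hψ)) with ⟨n2, hn2⟩
    cases L' with
    | nil => exact ⟨n1, hn1⟩
    | cons χ L'' =>
      exact ⟨andNF n1 n2, nf_and hn1 hn2⟩

theorem nf_dep (αs : List CForm) (β : CForm) :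
    ∃ n, equivNF (MTForm.dep αs β) n := by
  have hdep1 : MTThm ((MTForm.dep αs β).impl
      ((bigAnd (αs.map exclMid)).impl (exclMid β))) :=
    (MTThm.ax (MTAx.ipc3a _ _)).mp (.ax (MTAx.depAx αs β))
  have hdep2 : MTThm (((bigAnd (αs.map exclMid)).impl (exclMid β)).impl
      (MTForm.dep αs β)) :=
    (MTThm.ax (MTAx.ipc3b _ _)).mp (.ax (MTAx.depAx αs β))
  rcases nf_bigAnd (αs.map exclMid) (fun φ hφ => by
    rcases List.mem_map.1 hφ with ⟨γ, _, rfl⟩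
    exact ⟨[γ, γ.neg], nf_exclMid γ⟩) with ⟨n1, hn1⟩
  refine ⟨implNF n1 [β, β.neg], ?_⟩
  have himpl : equivNF ((bigAnd (αs.map exclMid)).impl (exclMid β))
      (implNF n1 [β, β.neg]) := nf_impl hn1 (nf_exclMid β)
  exact equivNF_congr himpl hdep1 hdep2

/-! ### Normal form theorem -/

theorem normal_form : ∀ φ : MTForm, ∃ n : List CForm, equivNF φ n := by
  intro φ
  induction φ with
  | var p => exact ⟨[.var p], nf_classical (.var p)⟩
  | bot => exact ⟨[.bot], nf_classical .bot⟩
  | dep αs β => exact nf_dep αs β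
  | and φ ψ ih1 ih2 =>
    rcases ih1 with ⟨n1, h1⟩; rcases ih2 with ⟨n2, h2⟩
    exact ⟨andNF n1 n2, nf_and h1 h2⟩
  | tensor φ ψ ih1 ih2 =>
    rcases ih1 with ⟨n1, h1⟩; rcases ih2 with ⟨n2, h2⟩
    exact ⟨tensorNF n1 n2, nf_tensor h1 h2⟩
  | or φ ψ ih1 ih2 =>
    rcases ih1 with ⟨n1, h1⟩; rcases ih2 with ⟨n2, h2⟩
    exact ⟨n1 ++ n2, nf_or h1 h2⟩
  | impl φ ψ ih1 ih2 =>
    rcases ih1 with ⟨n1, h1⟩; rcases ih2 with ⟨n2, h2⟩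
    exact ⟨implNF n1 n2, nf_impl h1 h2⟩
  | box φ ih =>
    rcases ih with ⟨n, hn⟩
    exact ⟨n.map .box ++ [.box .bot], nf_box hn⟩
  | dia φ ih =>
    rcases ih with ⟨n, hn⟩
    exact ⟨n.map .dia, nf_dia hn⟩

end MT
namespace MT

theorem sat_of_thm_impl {M : KModel} {X : Set M.W} {φ ψ : MTForm}
    (t : MTThm (φ.impl ψ)) (h : M.sat X φ) : M.sat X ψ :=
  thm_sound t M X X (subset_refl X) h

theorem completeness_main {φ ψ : MTForm} (h : MTEntails φ ψ) : MTThm (φ.impl ψ) := by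
  rcases normal_form φ with ⟨l, hl⟩
  rcases normal_form ψ with ⟨m, hm⟩
  have key : ∀ a ∈ l, MTThm (a.toMT.impl (disj m)) := by
    intro a ha
    refine classical_entails_disj (fun M X hsat => ?_)
    have h1 : M.sat X (disj l) := sat_of_thm_impl (thm_disj_mem ha) hsat
    have h2 : M.sat X φ := sat_of_thm_impl hl.2 h1
    have h3 : M.sat X ψ := h M X h2
    exact sat_of_thm_impl hm.1 h3
  exact thm_trans hl.1 (thm_trans (thm_disj_elim key) hm.2)

end MT

/-- STATEMENT 9: Completeness of the Hilbert system of MT₀. -/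
theorem mt0_completeness (φ ψ : MTForm) : MTEntails φ ψ → MTDer φ ψ := by
  intro h
  exact MTDer.mp (.thm (MT.completeness_main h)) .hyp
end
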